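/- arXiv:2012.06891 — 6 statements merged into one kernel-verified Lean document; each statement's English description precedes it below -/
import Mathlib

section
/- For integers n ≥ k ≥ 1 and every rational number q, define A_{n,k}(q) := Σ_{π ∈ R_{n,k}} q^{F_π}. Then A_{k,k}(q) = q^k, and for all n > k ≥ 1, A_{n,k}(q) = k·A_{n-1,k}(q) + A_{n-1,k-1}(q) (with the convention A_{m,0}(q) = 0 for m ≥ 1). -/
open Finset
open scoped Classical

/-- `π : Fin n → ℕ` is a restricted growth sequence (entries are positive, the first entry
is `1`, and each entry exceeds the maximum of the previous entries by at most `1`;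
equivalently `π₁ = 1` and `π_{j+1} ≤ 1 + max {π₁, …, π_j}`). -/
def IsRGS {n : ℕ} (π : Fin n → ℕ) : Prop :=
  ∀ i : Fin n, 1 ≤ π i ∧ π i ≤ (Finset.univ.filter (fun j : Fin n => j < i)).sup π + 1

/-- The (finite) set `R_n` of restricted growth sequences of length `n`
(all such sequences take values in `{1, …, n}`). -/
noncomputable def RGS (n : ℕ) : Finset (Fin n → ℕ) :=
  (Fintype.piFinset fun _ : Fin n => Finset.Icc 1 n).filter IsRGS

/-- The (finite) set `R_{n,k}` of restricted growth sequences of length `n`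
with maximal letter `k`. -/
noncomputable def RGSk (n k : ℕ) : Finset (Fin n → ℕ) :=
  (RGS n).filter (fun π => Finset.univ.sup π = k)

/-- `F_π`: the number of fixed points of `π`, i.e. (1-indexed) positions `i` with `π_i = i`. -/
def fixCount {n : ℕ} (π : Fin n → ℕ) : ℕ :=
  (Finset.univ.filter (fun i : Fin n => π i = (i : ℕ) + 1)).card

/- ===== auxiliary lemmas ===== -/

lemma filter_lt_castSucc (m : ℕ) (i : Fin m) :
    (Finset.univ.filter (fun j : Fin (m+1) => j < i.castSucc)) =
      (Finset.univ.filter (fun j : Fin m => j < i)).image Fin.castSucc := by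
  ext j
  simp only [mem_filter, mem_image, mem_univ, true_and]
  constructor
  · intro hj
    have hne : j ≠ Fin.last m := by
      intro h; subst h
      exact absurd hj (not_lt.2 (Fin.castSucc_lt_last i).le)
    obtain ⟨j', rfl⟩ := Fin.exists_castSucc_eq.2 hne
    exact ⟨j', by simpa [Fin.castSucc_lt_castSucc_iff] using hj, rfl⟩
  · rintro ⟨j', hj', rfl⟩
    exact Fin.castSucc_lt_castSucc_iff.2 hj'

lemma sup_lt_castSucc (m : ℕ) (π : Fin (m+1) → ℕ) (i : Fin m) :
    (Finset.univ.filter (fun j : Fin (m+1) => j < i.castSucc)).sup π =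
      (Finset.univ.filter (fun j : Fin m => j < i)).sup (π ∘ Fin.castSucc) := by
  rw [filter_lt_castSucc, Finset.sup_image]

lemma filter_lt_last (m : ℕ) :
    (Finset.univ.filter (fun j : Fin (m+1) => j < Fin.last m)) =
      (Finset.univ : Finset (Fin m)).image Fin.castSucc := by
  ext j
  simp only [mem_filter, mem_image, mem_univ, true_and]
  constructor
  · intro hj
    exact Fin.exists_castSucc_eq.2 (Fin.lt_last_iff_ne_last.1 hj)
  · rintro ⟨j', rfl⟩
    exact Fin.castSucc_lt_last j'

lemma sup_lt_last (m : ℕ) (π : Fin (m+1) → ℕ) :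
    (Finset.univ.filter (fun j : Fin (m+1) => j < Fin.last m)).sup π =
      Finset.univ.sup (π ∘ Fin.castSucc) := by
  rw [filter_lt_last, Finset.sup_image]

lemma snoc_comp_castSucc {m : ℕ} (σ : Fin m → ℕ) (a : ℕ) :
    (Fin.snoc σ a : Fin (m+1) → ℕ) ∘ Fin.castSucc = σ :=
  funext fun i => by simp

lemma univ_eq_insert_last (m : ℕ) :
    (Finset.univ : Finset (Fin (m+1))) =
      insert (Fin.last m) ((Finset.univ : Finset (Fin m)).image Fin.castSucc) := by
  ext j
  simp only [Finset.mem_univ, Finset.mem_insert, Finset.mem_image, true_iff]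
  by_cases h : j = Fin.last m
  · left; exact h
  · right
    obtain ⟨j', rfl⟩ := Fin.exists_castSucc_eq.2 h
    exact ⟨j', by simp⟩

lemma sup_snoc {m : ℕ} (σ : Fin m → ℕ) (a : ℕ) :
    Finset.univ.sup (Fin.snoc σ a : Fin (m+1) → ℕ) = max a (Finset.univ.sup σ) := by
  rw [univ_eq_insert_last, Finset.sup_insert, Finset.sup_image]
  simp [snoc_comp_castSucc]

lemma isRGS_snoc_iff {m : ℕ} (σ : Fin m → ℕ) (a : ℕ) :
    IsRGS (Fin.snoc σ a : Fin (m+1) → ℕ) ↔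
      IsRGS σ ∧ 1 ≤ a ∧ a ≤ Finset.univ.sup σ + 1 := by
  constructor
  · intro h
    refine ⟨fun i => ?_, ?_, ?_⟩
    · have hi := h i.castSucc
      rw [Fin.snoc_castSucc, sup_lt_castSucc, snoc_comp_castSucc] at hi
      exact hi
    · have hl := h (Fin.last m)
      rw [Fin.snoc_last] at hl
      exact hl.1
    · have hl := h (Fin.last m)
      rw [Fin.snoc_last, sup_lt_last, snoc_comp_castSucc] at hl
      exact hl.2
  · rintro ⟨hσ, ha1, ha2⟩ i
    refine Fin.lastCases ?_ (fun i => ?_) i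
    · rw [Fin.snoc_last, sup_lt_last, snoc_comp_castSucc]
      exact ⟨ha1, ha2⟩
    · rw [Fin.snoc_castSucc, sup_lt_castSucc, snoc_comp_castSucc]
      exact hσ i

lemma isRGS_le {n : ℕ} {π : Fin n → ℕ} (h : IsRGS π) : ∀ i : Fin n, π i ≤ (i : ℕ) + 1 := by
  have key : ∀ N : ℕ, ∀ i : Fin n, (i : ℕ) < N → π i ≤ (i : ℕ) + 1 := by
    intro N
    induction N with
    | zero => intro i hi; omega
    | succ N ih =>
      intro i hi
      have := (h i).2
      refine this.trans ?_
      have hsup : (Finset.univ.filter (fun j : Fin n => j < i)).sup π ≤ (i : ℕ) := by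
        apply Finset.sup_le
        intro j hj
        simp only [mem_filter, mem_univ, true_and] at hj
        have hji : (j : ℕ) < (i : ℕ) := hj
        have := ih j (by omega)
        omega
      omega
  exact fun i => key n i i.2

lemma mem_RGS_iff {n : ℕ} (π : Fin n → ℕ) : π ∈ RGS n ↔ IsRGS π := by
  rw [RGS, mem_filter, Fintype.mem_piFinset]
  constructor
  · exact fun h => h.2
  · intro h
    refine ⟨fun i => ?_, h⟩
    rw [Finset.mem_Icc]
    exact ⟨(h i).1, (isRGS_le h i).trans (by have := i.2; omega)⟩

lemma mem_RGSk_iff {n k : ℕ} (π : Fin n → ℕ) :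
    π ∈ RGSk n k ↔ IsRGS π ∧ Finset.univ.sup π = k := by
  rw [RGSk, mem_filter, mem_RGS_iff]

lemma mem_RGSk_snoc_iff {m k : ℕ} (σ : Fin m → ℕ) (a : ℕ) :
    (Fin.snoc σ a : Fin (m+1) → ℕ) ∈ RGSk (m+1) k ↔
      IsRGS σ ∧ 1 ≤ a ∧ a ≤ Finset.univ.sup σ + 1 ∧ max a (Finset.univ.sup σ) = k := by
  rw [mem_RGSk_iff, isRGS_snoc_iff, sup_snoc]
  tauto

lemma fixCount_snoc {m : ℕ} (σ : Fin m → ℕ) (a : ℕ) :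
    fixCount (Fin.snoc σ a : Fin (m+1) → ℕ) =
      fixCount σ + if a = m + 1 then 1 else 0 := by
  classical
  rw [fixCount, univ_eq_insert_last, Finset.filter_insert]
  have himg : Finset.filter (fun i : Fin (m+1) => (Fin.snoc σ a : Fin (m+1) → ℕ) i = (i : ℕ) + 1)
        ((Finset.univ : Finset (Fin m)).image Fin.castSucc)
      = ((Finset.univ : Finset (Fin m)).filter
          (fun i : Fin m => σ i = (i : ℕ) + 1)).image Fin.castSucc := by
    rw [Finset.filter_image]
    congr 1
    apply Finset.filter_congr
    intro i _
    simp [Fin.snoc_castSucc]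
  by_cases ha : a = m + 1
  · rw [if_pos (by simp [Fin.snoc_last, Fin.val_last, ha])]
    rw [Finset.card_insert_of_notMem, himg,
      Finset.card_image_of_injective _ (Fin.castSucc_injective m)]
    · simp [fixCount, ha]
    · intro hmem
      rw [himg, Finset.mem_image] at hmem
      obtain ⟨j, _, hj⟩ := hmem
      exact absurd hj (Fin.castSucc_lt_last j).ne
  · rw [if_neg (by simp [Fin.snoc_last, Fin.val_last, ha])]
    rw [himg, Finset.card_image_of_injective _ (Fin.castSucc_injective m)]
    simp [fixCount, ha]

lemma snoc_init {m : ℕ} (π : Fin (m+1) → ℕ) :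
    (Fin.snoc (π ∘ Fin.castSucc) (π (Fin.last m)) : Fin (m+1) → ℕ) = π :=
  Fin.snoc_init_self π

/-- sup of an RGS of length m is at most m. -/
lemma sup_le_of_isRGS {m : ℕ} {σ : Fin m → ℕ} (h : IsRGS σ) :
    Finset.univ.sup σ ≤ m := by
  apply Finset.sup_le
  intro i _
  have := isRGS_le h i
  have := i.2
  omega

/-- With `A_{n,k}(q) := Σ_{π ∈ R_{n,k}} q^{F_π}`, one has `A_{k,k}(q) = q^k`,
the convention `A_{m,0}(q) = 0` for `m ≥ 1`, and the recurrence
`A_{n,k}(q) = k·A_{n-1,k}(q) + A_{n-1,k-1}(q)` for `n > k ≥ 1`. -/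
theorem rgs_fixpoint_gf_recurrence (q : ℚ) :
    (∀ k : ℕ, 1 ≤ k → ∑ π ∈ RGSk k k, q ^ fixCount π = q ^ k) ∧
    (∀ m : ℕ, 1 ≤ m → ∑ π ∈ RGSk m 0, q ^ fixCount π = 0) ∧
    (∀ n k : ℕ, 1 ≤ k → k < n →
      ∑ π ∈ RGSk n k, q ^ fixCount π
        = k * (∑ π ∈ RGSk (n - 1) k, q ^ fixCount π)
          + ∑ π ∈ RGSk (n - 1) (k - 1), q ^ fixCount π) := by
  classical
  -- Part 1 (for all k ≥ 0, by induction)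
  have part1 : ∀ k : ℕ, ∑ π ∈ RGSk k k, q ^ fixCount π = q ^ k := by
    intro k
    induction k with
    | zero =>
      have : RGSk 0 0 = {fun i : Fin 0 => i.elim0} := by
        ext π
        simp only [mem_RGSk_iff, Finset.mem_singleton]
        constructor
        · intro _; funext i; exact i.elim0
        · intro h
          subst h
          exact ⟨fun i => i.elim0, by simp⟩
      rw [this, Finset.sum_singleton]
      have : fixCount (fun i : Fin 0 => i.elim0) = 0 := by
        rw [fixCount]
        simp
      rw [this]
    | succ k ih =>
      have key : ∑ π ∈ RGSk (k+1) (k+1), q ^ fixCount π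
          = ∑ σ ∈ RGSk k k, q ^ (fixCount σ + 1) := by
        refine Finset.sum_nbij' (fun π => π ∘ Fin.castSucc)
          (fun σ => Fin.snoc σ (k+1)) ?_ ?_ ?_ ?_ ?_
        · intro π hπ
          rw [← snoc_init π, mem_RGSk_snoc_iff] at hπ
          obtain ⟨hσ, _, hle, hmax⟩ := hπ
          rw [mem_RGSk_iff]
          refine ⟨hσ, ?_⟩
          have hs : Finset.univ.sup (π ∘ Fin.castSucc) ≤ k := sup_le_of_isRGS hσ
          have : π (Fin.last k) = k + 1 := by
            rcases max_choice (π (Fin.last k)) (Finset.univ.sup (π ∘ Fin.castSucc)) with h | h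
            · omega
            · omega
          omega
        · intro σ hσ
          rw [mem_RGSk_iff] at hσ
          rw [mem_RGSk_snoc_iff]
          refine ⟨hσ.1, by omega, by omega, by rw [hσ.2]; omega⟩
        · intro π hπ
          have hlast : π (Fin.last k) = k + 1 := by
            rw [← snoc_init π, mem_RGSk_snoc_iff] at hπ
            obtain ⟨hσ, _, hle, hmax⟩ := hπ
            have hs : Finset.univ.sup (π ∘ Fin.castSucc) ≤ k := sup_le_of_isRGS hσ
            rcases max_choice (π (Fin.last k)) (Finset.univ.sup (π ∘ Fin.castSucc)) with h | h
            · omega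
            · omega
          conv_rhs => rw [← snoc_init π]
          rw [hlast]
        · intro σ _
          exact Fin.init_snoc _ _
        · intro π hπ
          have hlast : π (Fin.last k) = k + 1 := by
            rw [← snoc_init π, mem_RGSk_snoc_iff] at hπ
            obtain ⟨hσ, _, hle, hmax⟩ := hπ
            have hs : Finset.univ.sup (π ∘ Fin.castSucc) ≤ k := sup_le_of_isRGS hσ
            rcases max_choice (π (Fin.last k)) (Finset.univ.sup (π ∘ Fin.castSucc)) with h | h
            · omega
            · omega
          congr 1
          conv_lhs => rw [← snoc_init π, hlast]
          rw [fixCount_snoc, if_pos rfl]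
      rw [key]
      have : ∑ σ ∈ RGSk k k, q ^ (fixCount σ + 1)
          = q * ∑ σ ∈ RGSk k k, q ^ fixCount σ := by
        rw [Finset.mul_sum]
        apply Finset.sum_congr rfl
        intro σ _
        ring
      rw [this, ih]
      ring
  refine ⟨fun k _ => part1 k, ?_, ?_⟩
  -- Part 2
  · intro m hm
    apply Finset.sum_eq_zero
    intro π hπ
    rw [mem_RGSk_iff] at hπ
    exfalso
    have h1 : 1 ≤ π ⟨0, by omega⟩ := (hπ.1 ⟨0, by omega⟩).1
    have : π ⟨0, by omega⟩ ≤ Finset.univ.sup π := Finset.le_sup (Finset.mem_univ _)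
    omega
  -- Part 3
  · intro n k hk hkn
    obtain ⟨m, rfl⟩ : ∃ m, n = m + 1 := ⟨n - 1, by omega⟩
    have hmk : k ≤ m := by omega
    try simp only [Nat.add_sub_cancel]
    set T : Finset ((Fin m → ℕ) × ℕ) :=
      (RGSk m k ×ˢ Finset.Icc 1 k) ∪ (RGSk m (k-1) ×ˢ {k}) with hT
    have hmem : ∀ σ : Fin m → ℕ, ∀ a : ℕ,
        ((Fin.snoc σ a : Fin (m+1) → ℕ) ∈ RGSk (m+1) k ↔ (σ, a) ∈ T) := by
      intro σ a
      rw [mem_RGSk_snoc_iff, hT, Finset.mem_union, Finset.mem_product,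
        Finset.mem_product, Finset.mem_singleton, mem_RGSk_iff, mem_RGSk_iff,
        Finset.mem_Icc]
      dsimp only
      constructor
      · rintro ⟨hσ, ha1, ha2, hmax⟩
        by_cases hs : Finset.univ.sup σ = k
        · left; exact ⟨⟨hσ, hs⟩, ha1, by omega⟩
        · right
          have hsk : Finset.univ.sup σ ≤ k := le_of_max_le_right hmax.le
          have hak : a = k := by
            rcases max_choice a (Finset.univ.sup σ) with h | h <;> omega
          exact ⟨⟨hσ, by omega⟩, hak⟩
      · rintro (⟨⟨hσ, hs⟩, ha1, ha2⟩ | ⟨⟨hσ, hs⟩, ha⟩)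
        · exact ⟨hσ, ha1, by omega, by omega⟩
        · exact ⟨hσ, by omega, by omega, by omega⟩
    have key : ∑ π ∈ RGSk (m+1) k, q ^ fixCount π
        = ∑ p ∈ T, q ^ fixCount p.1 := by
      refine Finset.sum_nbij' (fun π => (π ∘ Fin.castSucc, π (Fin.last m)))
        (fun p => Fin.snoc p.1 p.2) ?_ ?_ ?_ ?_ ?_
      · intro π hπ
        rw [← snoc_init π] at hπ
        rw [hmem _ _] at hπ
        exact hπ
      · intro p hp
        rw [hmem p.1 p.2]
        exact hp
      · intro π _
        simp only
        conv_rhs => rw [← snoc_init π]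
      · intro p _
        rw [snoc_comp_castSucc, Fin.snoc_last]
      · intro π hπ
        congr 1
        have ha : π (Fin.last m) ≤ k := by
          have hπ' := hπ
          rw [← snoc_init π, hmem _ _] at hπ'
          rw [hT, Finset.mem_union, Finset.mem_product, Finset.mem_product,
            Finset.mem_singleton, Finset.mem_Icc] at hπ'
          rcases hπ' with ⟨_, _, h⟩ | ⟨_, h⟩ <;> omega
        conv_lhs => rw [← snoc_init π]
        rw [fixCount_snoc, if_neg (by omega)]
        simp
    rw [key, hT]
    rw [Finset.sum_union]
    · rw [Finset.sum_product, Finset.sum_product]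
      have h1 : ∑ σ ∈ RGSk m k, ∑ a ∈ Finset.Icc 1 k, q ^ fixCount (σ, a).1
          = (k : ℚ) * ∑ σ ∈ RGSk m k, q ^ fixCount σ := by
        rw [Finset.mul_sum]
        apply Finset.sum_congr rfl
        intro σ _
        dsimp only
        rw [Finset.sum_const, Nat.card_Icc]
        simp [nsmul_eq_mul]
      have h2 : ∑ σ ∈ RGSk m (k-1), ∑ a ∈ ({k} : Finset ℕ), q ^ fixCount (σ, a).1
          = ∑ σ ∈ RGSk m (k-1), q ^ fixCount σ := by
        apply Finset.sum_congr rfl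
        intro σ _
        simp
      rw [h1, h2]
      rfl
    · rw [Finset.disjoint_left]
      rintro ⟨σ, a⟩ h1 h2
      rw [Finset.mem_product] at h1 h2
      rw [mem_RGSk_iff] at *
      have e1 := h1.1.2
      have e2 := h2.1.2
      omega
end

section
/- For integers n ≥ k ≥ 1, the number of restricted growth sequences of length n with maximal letter k having exactly k fixed points equals k^{n−k}; that is, |{π ∈ R_{n,k} : F_π = k}| = k^{n−k}. -/
open Finset
open scoped Classical

/-!
Every letter of `π ∈ R_{n,k}` is at most `k`, so a fixed point sits at a position `i ≤ k`;
having `k` fixed points therefore forces `π` to begin with `1 2 ⋯ k`. Conversely, any word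
beginning with `1 2 ⋯ k` whose remaining `n - k` letters lie in `{1, …, k}` is an RGS with maximal
letter `k`, and there are `k^{n-k}` of them.
-/

/-- Letters allowed at each position of a word `1 2 ⋯ k π_{k+1} ⋯ π_n` with all `π_j ≤ k`. -/
noncomputable def fixedPrefixBox (n k : ℕ) (i : Fin n) : Finset ℕ :=
  if (i : ℕ) < k then {(i : ℕ) + 1} else Icc 1 k

section

variable {n k : ℕ} {π : Fin n → ℕ}

lemma mem_piFinset_fixedPrefixBox_iff :
    π ∈ Fintype.piFinset (fixedPrefixBox n k) ↔
      (∀ i : Fin n, (i : ℕ) < k → π i = i + 1) ∧ ∀ i, 1 ≤ π i ∧ π i ≤ k := by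
  simp only [Fintype.mem_piFinset, fixedPrefixBox]
  constructor
  · intro h
    refine ⟨fun i hi => by simpa [hi] using h i, fun i => ?_⟩
    by_cases hi : (i : ℕ) < k
    · have := h i; simp only [hi, if_true, mem_singleton] at this; omega
    · simpa [hi] using h i
  · rintro ⟨hpre, hbound⟩ i
    split_ifs with hi
    · exact mem_singleton.2 (hpre i hi)
    · exact mem_Icc.2 (hbound i)

lemma card_piFinset_fixedPrefixBox :
    #(Fintype.piFinset (fixedPrefixBox n k)) = k ^ (n - k) := by
  have hcard : ∀ i : Fin n, #(fixedPrefixBox n k i) = if (i : ℕ) < k then 1 else k := by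
    intro i
    unfold fixedPrefixBox
    split_ifs <;> simp
  have hhigh : #{i : Fin n | ¬ (i : ℕ) < k} = n - k := by
    have := card_filter_add_card_filter_not (s := (univ : Finset (Fin n))) (fun i => (i : ℕ) < k)
    simp only [card_univ, Fintype.card_fin] at this
    have := Fin.card_filter_val_lt (n := n) (m := k)
    omega
  rw [Fintype.card_piFinset, prod_congr rfl fun i _ => hcard i, prod_ite]
  simp only [prod_const, one_pow, one_mul, hhigh]

lemma isRGS_of_prefix (hpre : ∀ i : Fin n, (i : ℕ) < k → π i = i + 1)
    (hbound : ∀ i, 1 ≤ π i ∧ π i ≤ k) : IsRGS π := by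
  intro i
  refine ⟨(hbound i).1, ?_⟩
  have hk : 1 ≤ k := (hbound i).1.trans (hbound i).2
  by_cases hi0 : (i : ℕ) = 0
  · rw [hpre i (by omega), hi0]
    exact Nat.le_add_left _ _
  -- the letter `m + 1` at position `m = min (i - 1) (k - 1)` precedes `i`
  set m := min ((i : ℕ) - 1) (k - 1) with hm
  have hj : (⟨m, by omega⟩ : Fin n) < i := Fin.mk_lt_of_lt_val (by omega)
  have hsup : m + 1 ≤ (univ.filter (fun j : Fin n => j < i)).sup π := by
    rw [← hpre ⟨m, by omega⟩ (by simp only; omega)]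
    exact le_sup (by simp [hj])
  have : π i ≤ m + 2 := by
    by_cases hik : (i : ℕ) < k
    · rw [hpre i hik]; omega
    · have := (hbound i).2; omega
  omega

lemma sup_eq_of_prefix (hkn : k ≤ n) (hpre : ∀ i : Fin n, (i : ℕ) < k → π i = i + 1)
    (hbound : ∀ i, 1 ≤ π i ∧ π i ≤ k) : univ.sup π = k := by
  refine le_antisymm (Finset.sup_le fun i _ => (hbound i).2) ?_
  rcases Nat.eq_zero_or_pos k with rfl | hk
  · exact Nat.zero_le _
  calc k = π ⟨k - 1, by omega⟩ := by rw [hpre _ (by simp; omega)]; simp; omega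
    _ ≤ univ.sup π := le_sup (mem_univ _)

lemma bounds_of_mem_RGSk (hπ : π ∈ RGSk n k) : ∀ i, 1 ≤ π i ∧ π i ≤ k := by
  simp only [RGSk, RGS, mem_filter] at hπ
  obtain ⟨⟨_, hrgs⟩, hsup⟩ := hπ
  exact fun i => ⟨(hrgs i).1, hsup ▸ le_sup (mem_univ i)⟩

lemma fixCount_eq_iff_of_le (hkn : k ≤ n) (hle : ∀ i, π i ≤ k) :
    fixCount π = k ↔ ∀ i : Fin n, (i : ℕ) < k → π i = i + 1 := by
  have hfix_sub : univ.filter (fun i : Fin n => π i = (i : ℕ) + 1) ⊆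
      univ.filter (fun i : Fin n => (i : ℕ) < k) := by
    intro i hi
    simp only [mem_filter, mem_univ, true_and] at hi ⊢
    have := hle i
    omega
  have hlow : #{i : Fin n | (i : ℕ) < k} = k := by
    convert Fin.card_filter_val_lt (n := n) (m := k) using 1
    omega
  unfold fixCount
  constructor
  · intro hfix i hi
    have heq := eq_of_subset_of_card_le hfix_sub (by omega)
    have : i ∈ univ.filter (fun i : Fin n => (i : ℕ) < k) := by simp [hi]
    simpa [← heq] using this
  · intro hpre
    rw [← hlow]
    congr 1
    ext i
    simp only [mem_filter, mem_univ, true_and]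
    exact ⟨fun h => by have := hle i; omega, hpre i⟩

lemma filter_fixCount_RGSk_eq_piFinset (hkn : k ≤ n) :
    (RGSk n k).filter (fun π => fixCount π = k) = Fintype.piFinset (fixedPrefixBox n k) := by
  ext π
  rw [mem_filter, mem_piFinset_fixedPrefixBox_iff]
  constructor
  · rintro ⟨hπ, hfix⟩
    have hbound := bounds_of_mem_RGSk hπ
    exact ⟨(fixCount_eq_iff_of_le hkn fun i => (hbound i).2).1 hfix, hbound⟩
  · rintro ⟨hpre, hbound⟩
    refine ⟨?_, (fixCount_eq_iff_of_le hkn fun i => (hbound i).2).2 hpre⟩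
    simp only [RGSk, RGS, mem_filter, Fintype.mem_piFinset, mem_Icc]
    exact ⟨⟨fun i => ⟨(hbound i).1, (hbound i).2.trans hkn⟩, isRGS_of_prefix hpre hbound⟩,
      sup_eq_of_prefix hkn hpre hbound⟩

end

theorem rgs_count_k_fixed_points_general (n k : ℕ) (hkn : k ≤ n) :
    ((RGSk n k).filter (fun π => fixCount π = k)).card = k ^ (n - k) := by
  rw [filter_fixCount_RGSk_eq_piFinset hkn, card_piFinset_fixedPrefixBox]

/-- For `n ≥ k ≥ 1`, the number of RGS of length `n` with maximal letter `k`
and exactly `k` fixed points is `k^{n-k}`. -/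
theorem rgs_count_k_fixed_points (n k : ℕ) (hk : 1 ≤ k) (hkn : k ≤ n) :
    ((RGSk n k).filter (fun π => fixCount π = k)).card = k ^ (n - k) :=
  rgs_count_k_fixed_points_general n k hkn
end

section
/- For integers 1 ≤ j ≤ i, the following partial fraction decomposition holds in the field of rational functions ℚ(X): (Π_{r=j}^{i} (1 − r·X))⁻¹ = Σ_{ℓ=j}^{i} ((−1)^{i−ℓ} · C(i−j, ℓ−j) · ℓ^{i−j} / (i−j)!) · (1 − ℓ·X)⁻¹, where C(a,b) denotes the binomial coefficient. -/
open Finset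
open scoped Classical

private lemma one_sub_ne (r : ℚ) : (1 - RatFunc.C r * RatFunc.X) ≠ 0 := by
  have hp : (1 - Polynomial.C r * Polynomial.X : Polynomial ℚ) ≠ 0 := by
    intro h
    have := congrArg (fun p => Polynomial.coeff p 0) h
    simp at this
  have h2 : (1 - RatFunc.C r * RatFunc.X) =
      algebraMap (Polynomial ℚ) (RatFunc ℚ) (1 - Polynomial.C r * Polynomial.X) := by
    simp [map_sub, map_mul, RatFunc.algebraMap_C, RatFunc.algebraMap_X]
  rw [h2]
  exact RatFunc.algebraMap_ne_zero hp

private lemma rgs_key (n : ℕ) : ∀ j : ℕ, 1 ≤ j →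
    (∏ r ∈ Finset.Icc j (j+n), (1 - RatFunc.C (r : ℚ) * RatFunc.X))⁻¹
      = ∑ ℓ ∈ Finset.Icc j (j+n),
          RatFunc.C ((-1 : ℚ) ^ (j+n - ℓ) * ((j+n - j).choose (ℓ - j) : ℚ) * (ℓ : ℚ) ^ (j+n - j)
              / (j+n - j).factorial)
            * (1 - RatFunc.C (ℓ : ℚ) * RatFunc.X)⁻¹ := by
  induction n with
  | zero =>
    intro j hj
    simp
  | succ n IH =>
    intro j hj
    simp only [show j + (n+1) = j + n + 1 from rfl]
    rw [show j+n+1-j = n+1 from by omega]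
    have IH1 := IH j hj
    rw [show j+n-j = n from by omega] at IH1
    have IH2 := IH (j+1) (by omega)
    rw [show j+1+n = j+n+1 from by omega] at IH2
    rw [show j+n+1-(j+1) = n from by omega] at IH2
    have hPtop : (∏ r ∈ Finset.Icc j (j+n+1), (1 - RatFunc.C (r : ℚ) * RatFunc.X))
        = (∏ r ∈ Finset.Icc j (j+n), (1 - RatFunc.C (r : ℚ) * RatFunc.X)) * (1 - RatFunc.C ((j+n+1 : ℕ) : ℚ) * RatFunc.X) :=
      Finset.prod_Icc_succ_top (by omega) _
    have hPbot : (∏ r ∈ Finset.Icc j (j+n+1), (1 - RatFunc.C (r : ℚ) * RatFunc.X))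
        = (1 - RatFunc.C ((j : ℕ) : ℚ) * RatFunc.X) * ∏ r ∈ Finset.Icc (j+1) (j+n+1), (1 - RatFunc.C (r : ℚ) * RatFunc.X) := by
      rw [← Finset.insert_Icc_add_one_left_eq_Icc (show j ≤ j+n+1 by omega), Finset.prod_insert (by simp)]
    have e1 : (∏ r ∈ Finset.Icc (j+1) (j+n+1), (1 - RatFunc.C (r : ℚ) * RatFunc.X))⁻¹
        = (1 - RatFunc.C ((j : ℕ) : ℚ) * RatFunc.X) * (∏ r ∈ Finset.Icc j (j+n+1), (1 - RatFunc.C (r : ℚ) * RatFunc.X))⁻¹ := by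
      rw [hPbot, mul_inv, ← mul_assoc, mul_inv_cancel₀ (one_sub_ne _), one_mul]
    have e2 : (∏ r ∈ Finset.Icc j (j+n), (1 - RatFunc.C (r : ℚ) * RatFunc.X))⁻¹
        = (1 - RatFunc.C ((j+n+1 : ℕ) : ℚ) * RatFunc.X) * (∏ r ∈ Finset.Icc j (j+n+1), (1 - RatFunc.C (r : ℚ) * RatFunc.X))⁻¹ := by
      rw [hPtop, mul_inv, mul_comm ((∏ r ∈ Finset.Icc j (j+n), (1 - RatFunc.C (r : ℚ) * RatFunc.X))⁻¹),
        ← mul_assoc, mul_inv_cancel₀ (one_sub_ne _), one_mul]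
    have hC : RatFunc.C (((j+n+1 : ℕ) : ℚ)) * (1 - RatFunc.C ((j : ℕ) : ℚ) * RatFunc.X)
        - RatFunc.C ((j : ℕ) : ℚ) * (1 - RatFunc.C ((j+n+1 : ℕ) : ℚ) * RatFunc.X)
        = RatFunc.C ((n : ℚ) + 1) := by
      rw [show (RatFunc.C (((j+n+1 : ℕ) : ℚ)) * (1 - RatFunc.C ((j : ℕ) : ℚ) * RatFunc.X)
        - RatFunc.C ((j : ℕ) : ℚ) * (1 - RatFunc.C ((j+n+1 : ℕ) : ℚ) * RatFunc.X))
        = RatFunc.C (((j+n+1 : ℕ) : ℚ)) - RatFunc.C ((j : ℕ) : ℚ) from by ring, ← map_sub]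
      congr 1
      push_cast
      ring
    have hq0 : ((n : ℚ) + 1) ≠ 0 := by positivity
    have hkey : (∏ r ∈ Finset.Icc j (j+n+1), (1 - RatFunc.C (r : ℚ) * RatFunc.X))⁻¹
        = RatFunc.C ((n : ℚ) + 1)⁻¹ *
          (RatFunc.C ((j+n+1 : ℕ) : ℚ) * (∏ r ∈ Finset.Icc (j+1) (j+n+1), (1 - RatFunc.C (r : ℚ) * RatFunc.X))⁻¹
           - RatFunc.C ((j : ℕ) : ℚ) * (∏ r ∈ Finset.Icc j (j+n), (1 - RatFunc.C (r : ℚ) * RatFunc.X))⁻¹) := by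
      rw [e1, e2,
        show (RatFunc.C ((j+n+1 : ℕ) : ℚ) * ((1 - RatFunc.C ((j : ℕ) : ℚ) * RatFunc.X) * (∏ r ∈ Finset.Icc j (j+n+1), (1 - RatFunc.C (r : ℚ) * RatFunc.X))⁻¹)
           - RatFunc.C ((j : ℕ) : ℚ) * ((1 - RatFunc.C ((j+n+1 : ℕ) : ℚ) * RatFunc.X) * (∏ r ∈ Finset.Icc j (j+n+1), (1 - RatFunc.C (r : ℚ) * RatFunc.X))⁻¹))
          = (RatFunc.C (((j+n+1 : ℕ) : ℚ)) * (1 - RatFunc.C ((j : ℕ) : ℚ) * RatFunc.X)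
        - RatFunc.C ((j : ℕ) : ℚ) * (1 - RatFunc.C ((j+n+1 : ℕ) : ℚ) * RatFunc.X)) * (∏ r ∈ Finset.Icc j (j+n+1), (1 - RatFunc.C (r : ℚ) * RatFunc.X))⁻¹ from by ring,
        hC, ← mul_assoc, ← map_mul, inv_mul_cancel₀ hq0, map_one, one_mul]
    rw [hkey, IH2, IH1]
    have sA : (∑ ℓ ∈ Finset.Icc (j+1) (j+n+1),
          RatFunc.C ((-1 : ℚ) ^ (j+n+1 - ℓ) * ((n).choose (ℓ - (j+1)) : ℚ) * (ℓ : ℚ) ^ n / (n).factorial)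
            * (1 - RatFunc.C (ℓ : ℚ) * RatFunc.X)⁻¹)
        = ∑ ℓ ∈ Finset.Icc j (j+n+1), (if j+1 ≤ ℓ then
          RatFunc.C ((-1 : ℚ) ^ (j+n+1 - ℓ) * ((n).choose (ℓ - (j+1)) : ℚ) * (ℓ : ℚ) ^ n / (n).factorial)
            * (1 - RatFunc.C (ℓ : ℚ) * RatFunc.X)⁻¹ else 0) := by
      rw [← Finset.insert_Icc_add_one_left_eq_Icc (show j ≤ j+n+1 by omega), Finset.sum_insert (by simp),
        if_neg (by omega), zero_add]
      exact Finset.sum_congr rfl (fun ℓ hℓ => (if_pos (Finset.mem_Icc.mp hℓ).1).symm)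
    have sB : (∑ ℓ ∈ Finset.Icc j (j+n),
          RatFunc.C ((-1 : ℚ) ^ (j+n - ℓ) * ((n).choose (ℓ - j) : ℚ) * (ℓ : ℚ) ^ n / (n).factorial)
            * (1 - RatFunc.C (ℓ : ℚ) * RatFunc.X)⁻¹)
        = ∑ ℓ ∈ Finset.Icc j (j+n+1), (if ℓ ≤ j+n then
          RatFunc.C ((-1 : ℚ) ^ (j+n - ℓ) * ((n).choose (ℓ - j) : ℚ) * (ℓ : ℚ) ^ n / (n).factorial)
            * (1 - RatFunc.C (ℓ : ℚ) * RatFunc.X)⁻¹ else 0) := by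
      rw [← Finset.insert_Icc_right_eq_Icc_add_one (show j ≤ j+n+1 by omega), Finset.sum_insert (by simp),
        if_neg (by omega), zero_add]
      exact Finset.sum_congr rfl (fun ℓ hℓ => (if_pos (Finset.mem_Icc.mp hℓ).2).symm)
    rw [sA, sB, Finset.mul_sum, Finset.mul_sum, ← Finset.sum_sub_distrib, Finset.mul_sum]
    apply Finset.sum_congr rfl
    intro ℓ hℓ
    obtain ⟨hℓ1, hℓ2⟩ := Finset.mem_Icc.mp hℓ
    rcases eq_or_lt_of_le hℓ1 with h1 | h1
    · -- ℓ = j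
      subst h1
      rw [if_neg (by omega), if_pos (by omega)]
      rw [show j+n-j = n from by omega, show j-j = 0 from by omega,
        show j+n+1-j = n+1 from by omega]
      have hq : (-1:ℚ)^(n+1) * ((n+1).choose 0 : ℚ) * (j:ℚ)^(n+1) / ((n+1).factorial : ℚ)
          = ((n:ℚ)+1)⁻¹ * (((j+n+1 : ℕ):ℚ) * 0
            - (j:ℚ) * ((-1:ℚ)^n * (n.choose 0 : ℚ) * (j:ℚ)^n / (n.factorial : ℚ))) := by
        have hf : ((n+1).factorial : ℚ) = ((n:ℚ)+1) * n.factorial := by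
          rw [Nat.factorial_succ]; push_cast; ring
        have hfe : (n.factorial : ℚ) ≠ 0 := by positivity
        have hq0' : ((n:ℚ)+1) ≠ 0 := by positivity
        rw [hf, Nat.choose_zero_right, Nat.choose_zero_right]; field_simp; ring
      rw [congrArg RatFunc.C hq]
      simp only [map_mul, map_sub, map_zero, map_inv₀, map_div₀, map_pow, map_neg, map_one,
        map_natCast]
      ring
    · rcases eq_or_lt_of_le hℓ2 with h2 | h2
      · -- ℓ = j+n+1
        subst h2
        rw [if_pos (by omega), if_neg (by omega),
          show j+n+1-(j+n+1) = 0 from by omega, show j+n+1-(j+1) = n from by omega,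
          show j+n+1-j = n+1 from by omega]
        have hq : (-1:ℚ)^0 * ((n+1).choose (n+1) : ℚ) * ((j+n+1 : ℕ):ℚ)^(n+1) / ((n+1).factorial : ℚ)
            = ((n:ℚ)+1)⁻¹ * (((j+n+1:ℕ):ℚ) * ((-1:ℚ)^0 * (n.choose n : ℚ) * ((j+n+1:ℕ):ℚ)^n / (n.factorial:ℚ))
              - (j:ℚ) * 0) := by
          have hf : ((n+1).factorial : ℚ) = ((n:ℚ)+1) * n.factorial := by
            rw [Nat.factorial_succ]; push_cast; ring
          have hfe : (n.factorial : ℚ) ≠ 0 := by positivity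
          have hq0' : ((n:ℚ)+1) ≠ 0 := by positivity
          rw [hf, Nat.choose_self, Nat.choose_self]; field_simp; ring
        rw [congrArg RatFunc.C hq]
        simp only [map_mul, map_sub, map_zero, map_inv₀, map_div₀, map_pow, map_neg, map_one,
          map_natCast]
        ring
      · -- middle
        obtain ⟨s, rfl⟩ : ∃ s, ℓ = j + s + 1 := ⟨ℓ - j - 1, by omega⟩
        obtain ⟨d, rfl⟩ : ∃ d, n = s + d + 1 := ⟨n - s - 1, by omega⟩
        rw [if_pos (by omega), if_pos (by omega),
          show j+(s+d+1)+1-(j+s+1) = d+1 from by omega,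
          show j+s+1-(j+1) = s from by omega,
          show j+(s+d+1)-(j+s+1) = d from by omega,
          show j+s+1-j = s+1 from by omega]
        have hp : (s+d+1+1).choose (s+1) = (s+d+1).choose s + (s+d+1).choose (s+1) :=
          Nat.choose_succ_succ' (s+d+1) s
        have hr : (s+d+1).choose (s+1) * (s+1) = (s+d+1).choose s * (d+1) := by
          have := Nat.choose_succ_right_eq (s+d+1) s
          simpa [show s+d+1-s = d+1 by omega] using this
        have hr' : ((s+d+1).choose (s+1) : ℚ) * ((s:ℚ)+1) = ((s+d+1).choose s : ℚ) * ((d:ℚ)+1) := by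
          exact_mod_cast congrArg (Nat.cast : ℕ → ℚ) hr
        have hq : (-1:ℚ)^(d+1) * (((s+d+1)+1).choose (s+1) : ℚ) * ((j+s+1 : ℕ):ℚ)^((s+d+1)+1) / (((s+d+1)+1).factorial : ℚ)
            = (((s+d+1 : ℕ):ℚ)+1)⁻¹ *
              (((j+(s+d+1)+1 : ℕ):ℚ) * ((-1:ℚ)^(d+1) * ((s+d+1).choose s : ℚ) * ((j+s+1:ℕ):ℚ)^(s+d+1) / ((s+d+1).factorial:ℚ))
               - (j:ℚ) * ((-1:ℚ)^d * ((s+d+1).choose (s+1) : ℚ) * ((j+s+1:ℕ):ℚ)^(s+d+1) / ((s+d+1).factorial:ℚ))) := by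
          have hf : (((s+d+1)+1).factorial : ℚ) = ((s:ℚ)+d+2) * ((s+d+1).factorial : ℚ) := by
            rw [Nat.factorial_succ]; push_cast; ring
          have hfe : (((s+d+1)).factorial : ℚ) ≠ 0 := by positivity
          have hne2 : ((s:ℚ)+(d:ℚ)+2) ≠ 0 := by positivity
          rw [hp, hf]
          push_cast
          field_simp
          linear_combination ((-1:ℚ))^(d+1) * ((j:ℚ)+s+1)^(s+d+1) * ((s:ℚ)+d+2) * hr'
        rw [congrArg RatFunc.C hq]
        simp only [map_mul, map_sub, map_zero, map_inv₀, map_div₀, map_pow, map_neg, map_one,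
          map_natCast]
        ring

/-- Partial fraction decomposition in `ℚ(X)`: for `1 ≤ j ≤ i`,
`(Π_{r=j}^{i} (1 - rX))⁻¹ = Σ_{ℓ=j}^{i} ((-1)^{i-ℓ} C(i-j, ℓ-j) ℓ^{i-j} / (i-j)!) (1 - ℓX)⁻¹`. -/
theorem rgs_partial_fraction (j i : ℕ) (hj : 1 ≤ j) (hji : j ≤ i) :
    (∏ r ∈ Finset.Icc j i, (1 - RatFunc.C (r : ℚ) * RatFunc.X))⁻¹
      = ∑ ℓ ∈ Finset.Icc j i,
          RatFunc.C ((-1 : ℚ) ^ (i - ℓ) * ((i - j).choose (ℓ - j) : ℚ) * (ℓ : ℚ) ^ (i - j)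
              / (i - j).factorial)
            * (1 - RatFunc.C (ℓ : ℚ) * RatFunc.X)⁻¹ := by
  obtain ⟨n, rfl⟩ : ∃ n, i = j + n := ⟨i - j, by omega⟩
  exact rgs_key n j hj
end

section
/- Define rational numbers a_{m,i} for integers 1 ≤ i ≤ m by the recurrence a_{1,1} = 1, a_{m,m} = 1 + a_{m−1,m−1} for m ≥ 2, and a_{m,i} = a_{m−1,i−1} + i·a_{m−1,i} for 1 ≤ i ≤ m−1 (with the convention a_{m,0} = 0). Then for all 1 ≤ i ≤ m, a_{m,i} = Σ_{j=1}^{i} Σ_{ℓ=j}^{i} (−1)^{i−ℓ} · C(i−j, ℓ−j) · ℓ^{m−j} / (i−j)!, where C(a,b) denotes the binomial coefficient. -/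
open Finset
open scoped Classical

lemma fd_aux (k : ℕ) : ∀ n ≤ k, ∀ c : ℚ,
    ∑ t ∈ Finset.range (k+1), (-1:ℚ)^t * (k.choose t) * ((t:ℚ)+c)^n
      = if n = k then (-1:ℚ)^k * k.factorial else 0 := by
  induction k with
  | zero =>
    intro n hn c
    interval_cases n
    simp
  | succ k ih =>
    intro n hn c
    have hsplit : ∀ t ∈ Finset.range (k+2),
        (-1:ℚ)^t * ((k+1).choose t) * ((t:ℚ)+c)^n
          = (-1:ℚ)^t * (k.choose t) * ((t:ℚ)+c)^n
            + (if t = 0 then 0 else (-1:ℚ)^t * (k.choose (t-1)) * ((t:ℚ)+c)^n) := by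
      intro t _
      cases t with
      | zero => simp
      | succ s =>
        simp only [Nat.choose_succ_succ, Nat.succ_ne_zero, if_false, Nat.succ_sub_one]
        push_cast
        ring
    have hA : ∑ t ∈ Finset.range (k+2), (-1:ℚ)^t * (k.choose t) * ((t:ℚ)+c)^n
        = ∑ t ∈ Finset.range (k+1), (-1:ℚ)^t * (k.choose t) * ((t:ℚ)+c)^n := by
      rw [Finset.sum_range_succ]
      simp [Nat.choose_succ_self]
    have hB : ∑ t ∈ Finset.range (k+2),
          (if t = 0 then (0:ℚ) else (-1:ℚ)^t * (k.choose (t-1)) * ((t:ℚ)+c)^n)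
        = -∑ t ∈ Finset.range (k+1), (-1:ℚ)^t * (k.choose t) * ((t:ℚ)+(c+1))^n := by
      rw [Finset.sum_range_succ' (fun t => if t = 0 then (0:ℚ)
          else (-1:ℚ)^t * (k.choose (t-1)) * ((t:ℚ)+c)^n) (k+1)]
      simp only [Nat.succ_ne_zero, if_false, Nat.succ_sub_one, if_true, eq_self_iff_true,
        add_zero]
      rw [← Finset.sum_neg_distrib]
      apply Finset.sum_congr rfl
      intro s _
      push_cast
      ring
    have hT : ∑ t ∈ Finset.range (k+2), (-1:ℚ)^t * ((k+1).choose t) * ((t:ℚ)+c)^n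
        = (∑ t ∈ Finset.range (k+1), (-1:ℚ)^t * (k.choose t) * ((t:ℚ)+c)^n)
          - (∑ t ∈ Finset.range (k+1), (-1:ℚ)^t * (k.choose t) * ((t:ℚ)+(c+1))^n) := by
      rw [Finset.sum_congr rfl hsplit, Finset.sum_add_distrib, hA, hB, sub_eq_add_neg]
    rw [hT]
    have hbin : ∀ t ∈ Finset.range (k+1),
        (-1:ℚ)^t * (k.choose t) * ((t:ℚ)+c)^n
          - (-1:ℚ)^t * (k.choose t) * ((t:ℚ)+(c+1))^n
        = ∑ r ∈ Finset.range n, -((n.choose r : ℚ)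
            * ((-1:ℚ)^t * (k.choose t) * ((t:ℚ)+c)^r)) := by
      intro t _
      have hpow : ((t:ℚ)+(c+1))^n
          = ((t:ℚ)+c)^n + ∑ r ∈ Finset.range n, ((t:ℚ)+c)^r * (n.choose r : ℚ) := by
        have h := add_pow ((t:ℚ)+c) 1 n
        simp only [one_pow, mul_one] at h
        rw [show (t:ℚ)+(c+1) = ((t:ℚ)+c)+1 by ring, h, Finset.sum_range_succ,
          Nat.choose_self]
        push_cast
        ring
      rw [hpow, mul_add, sub_add_eq_sub_sub, sub_self, zero_sub, Finset.mul_sum,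
        ← Finset.sum_neg_distrib]
      apply Finset.sum_congr rfl
      intro r _
      ring
    rw [← Finset.sum_sub_distrib, Finset.sum_congr rfl hbin, Finset.sum_comm]
    have hswap : ∀ r ∈ Finset.range n,
        ∑ t ∈ Finset.range (k+1), -((n.choose r : ℚ)
            * ((-1:ℚ)^t * (k.choose t) * ((t:ℚ)+c)^r))
        = -((n.choose r : ℚ) * (if r = k then (-1:ℚ)^k * k.factorial else 0)) := by
      intro r hr
      simp only [Finset.mem_range] at hr
      rw [Finset.sum_neg_distrib, ← Finset.mul_sum, ih r (by omega) c]
    rw [Finset.sum_congr rfl hswap]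
    rcases Nat.lt_or_ge n (k+1) with hlt | hge
    · have : ∀ r ∈ Finset.range n, -((n.choose r : ℚ)
          * (if r = k then (-1:ℚ)^k * k.factorial else 0)) = 0 := by
        intro r hr
        simp only [Finset.mem_range] at hr
        rw [if_neg (by omega)]
        ring
      rw [Finset.sum_congr rfl this, Finset.sum_const_zero, if_neg (by omega)]
    · have hnk : n = k + 1 := le_antisymm hn hge
      subst hnk
      rw [if_pos rfl, Finset.sum_range_succ]
      have : ∀ r ∈ Finset.range k, -(((k+1).choose r : ℚ)
          * (if r = k then (-1:ℚ)^k * k.factorial else 0)) = 0 := by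
        intro r hr
        simp only [Finset.mem_range] at hr
        rw [if_neg (by omega)]
        ring
      rw [Finset.sum_congr rfl this, Finset.sum_const_zero, if_pos rfl,
        Nat.choose_succ_self_right, Nat.factorial_succ]
      push_cast
      ring

/-- The closed-form expression. -/
def bb (m i : ℕ) : ℚ :=
  ∑ j ∈ Finset.Icc 1 i, ∑ ℓ ∈ Finset.Icc j i,
    (-1 : ℚ) ^ (i - ℓ) * ((i - j).choose (ℓ - j) : ℚ) * (ℓ : ℚ) ^ (m - j)
      / (i - j).factorial

lemma bb_zero (m : ℕ) : bb m 0 = 0 := by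
  simp [bb]

lemma negpow (K t : ℕ) (h : t ≤ K) : (-1:ℚ)^(K-t) = (-1:ℚ)^K * (-1:ℚ)^t := by
  conv_rhs => rw [← Nat.sub_add_cancel h]
  rw [pow_add, mul_assoc, ← pow_add, ← two_mul, pow_mul]
  norm_num

lemma bb_diag (m : ℕ) : bb m m = m := by
  have inner : ∀ j ∈ Finset.Icc 1 m,
      (∑ ℓ ∈ Finset.Icc j m,
        (-1 : ℚ) ^ (m - ℓ) * ((m - j).choose (ℓ - j) : ℚ) * (ℓ : ℚ) ^ (m - j)
          / (m - j).factorial) = 1 := by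
    intro j hj
    simp only [Finset.mem_Icc] at hj
    have hreix : Finset.Icc j m = Finset.Ico j (m+1) := by
      rw [Finset.Ico_add_one_right_eq_Icc]
    rw [hreix, Finset.sum_Ico_eq_sum_range]
    have hlen : m + 1 - j = (m - j) + 1 := by omega
    rw [hlen]
    have hpt : ∀ t ∈ Finset.range ((m-j)+1),
        (-1 : ℚ) ^ (m - (j+t)) * ((m - j).choose ((j+t) - j) : ℚ) * ((j+t : ℕ) : ℚ) ^ (m - j)
          / (m - j).factorial
        = ((-1:ℚ)^(m-j) / (m-j).factorial)
            * ((-1:ℚ)^t * ((m-j).choose t : ℚ) * ((t:ℚ) + (j:ℚ))^(m-j)) := by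
      intro t ht
      simp only [Finset.mem_range] at ht
      have h1 : m - (j+t) = (m-j) - t := by omega
      have h2 : (j+t) - j = t := by omega
      have h3 : ((j+t : ℕ) : ℚ) = (t:ℚ) + (j:ℚ) := by push_cast; ring
      rw [h1, h2, h3, negpow (m-j) t (by omega)]
      ring
    rw [Finset.sum_congr rfl hpt, ← Finset.mul_sum, fd_aux (m-j) (m-j) le_rfl (j:ℚ),
      if_pos rfl]
    have hfac : ((m-j).factorial : ℚ) ≠ 0 := by
      exact_mod_cast (m-j).factorial_ne_zero
    field_simp
    rw [← pow_mul, pow_mul']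
    norm_num
  rw [bb, Finset.sum_congr rfl inner, Finset.sum_const, Nat.card_Icc]
  simp

lemma choose_fac (b t : ℕ) (h : t ≤ b) :
    ((b+1).choose t : ℚ) * ((b:ℚ) + 1 - t) / (b+1).factorial
      = (b.choose t : ℚ) / b.factorial := by
  have hnat : (b+1) * b.choose t = (b+1).choose t * (b+1-t) :=
    (Nat.add_one_mul_choose_eq b t).trans (Nat.choose_succ_right_eq (b+1) t)
  have hq : ((b:ℚ)+1) * (b.choose t : ℚ) = ((b+1).choose t : ℚ) * ((b:ℚ)+1-(t:ℚ)) := by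
    have h2 := congrArg (fun x : ℕ => (x:ℚ)) hnat
    push_cast [Nat.cast_sub (show t ≤ b+1 by omega)] at h2
    linear_combination h2
  have hb : ((b.factorial : ℚ)) ≠ 0 := by exact_mod_cast b.factorial_ne_zero
  have hb1 : (((b+1).factorial : ℚ)) ≠ 0 := by exact_mod_cast (b+1).factorial_ne_zero
  rw [div_eq_div_iff hb1 hb]
  rw [Nat.factorial_succ]
  push_cast
  linear_combination -(b.factorial : ℚ) * hq


lemma bb_rec (m i : ℕ) (h : i + 1 ≤ m) :
    bb (m+1) (i+1) = bb m i + ((i:ℚ)+1) * bb m (i+1) := by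
  have hpt : ∀ j ∈ Finset.Icc 1 (i+1), ∀ ℓ ∈ Finset.Icc j (i+1),
      (-1:ℚ)^(i+1-ℓ) * ((i+1-j).choose (ℓ-j) : ℚ) * (ℓ:ℚ)^(m+1-j) / (i+1-j).factorial
      = ((i:ℚ)+1) * ((-1:ℚ)^(i+1-ℓ) * ((i+1-j).choose (ℓ-j) : ℚ) * (ℓ:ℚ)^(m-j)
            / (i+1-j).factorial)
        + (if ℓ = i+1 then 0
            else (-1:ℚ)^(i-ℓ) * ((i-j).choose (ℓ-j) : ℚ) * (ℓ:ℚ)^(m-j)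
              / (i-j).factorial) := by
    intro j hj ℓ hℓ
    simp only [Finset.mem_Icc] at hj hℓ
    by_cases hli : ℓ = i+1
    · subst hli
      rw [if_pos rfl, add_zero]
      have e3 : m+1-j = (m-j)+1 := by omega
      simp only [Nat.sub_self, Nat.choose_self, pow_zero, Nat.cast_one, one_mul, e3, pow_succ]
      push_cast
      ring
    · have hl : ℓ ≤ i := by omega
      rw [if_neg hli]
      have e1 : i+1-ℓ = (i-ℓ)+1 := by omega
      have e2 : i+1-j = (i-j)+1 := by omega
      have e3 : m+1-j = (m-j)+1 := by omega
      have e4 : ℓ-j ≤ i-j := by omega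
      have key := choose_fac (i-j) (ℓ-j) e4
      have hcast : ((i-j : ℕ):ℚ) + 1 - ((ℓ-j : ℕ):ℚ) = (i:ℚ)+1-(ℓ:ℚ) := by
        rw [Nat.cast_sub (show j ≤ i by omega), Nat.cast_sub (show j ≤ ℓ by omega)]
        ring
      rw [hcast] at key
      rw [e1, e2, e3, pow_succ, pow_succ]
      linear_combination ((-1:ℚ)^(i-ℓ) * (ℓ:ℚ)^(m-j)) * key
  have step1 : bb (m+1) (i+1)
      = ((i:ℚ)+1) * bb m (i+1)
        + ∑ j ∈ Finset.Icc 1 (i+1), ∑ ℓ ∈ Finset.Icc j (i+1),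
            (if ℓ = i+1 then (0:ℚ)
              else (-1:ℚ)^(i-ℓ) * ((i-j).choose (ℓ-j) : ℚ) * (ℓ:ℚ)^(m-j)
                / (i-j).factorial) := by
    rw [bb]
    rw [Finset.sum_congr rfl (fun j hj => Finset.sum_congr rfl (hpt j hj))]
    rw [show (bb m (i+1)) = ∑ j ∈ Finset.Icc 1 (i+1), ∑ ℓ ∈ Finset.Icc j (i+1),
        (-1:ℚ)^(i+1-ℓ) * ((i+1-j).choose (ℓ-j) : ℚ) * (ℓ:ℚ)^(m-j) / (i+1-j).factorial
        from rfl]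
    rw [Finset.mul_sum, ← Finset.sum_add_distrib]
    apply Finset.sum_congr rfl
    intro j hj
    rw [Finset.sum_add_distrib, Finset.mul_sum]
  have step2 : (∑ j ∈ Finset.Icc 1 (i+1), ∑ ℓ ∈ Finset.Icc j (i+1),
        (if ℓ = i+1 then (0:ℚ)
          else (-1:ℚ)^(i-ℓ) * ((i-j).choose (ℓ-j) : ℚ) * (ℓ:ℚ)^(m-j)
            / (i-j).factorial)) = bb m i := by
    rw [Finset.sum_Icc_succ_top (show 1 ≤ i+1 by omega)]
    have htop : (∑ ℓ ∈ Finset.Icc (i+1) (i+1),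
        (if ℓ = i+1 then (0:ℚ)
          else (-1:ℚ)^(i-ℓ) * ((i-(i+1)).choose (ℓ-(i+1)) : ℚ) * (ℓ:ℚ)^(m-(i+1))
            / (i-(i+1)).factorial)) = 0 := by
      simp
    rw [htop, add_zero, bb]
    apply Finset.sum_congr rfl
    intro j hj
    simp only [Finset.mem_Icc] at hj
    rw [Finset.sum_Icc_succ_top (show j ≤ i+1 by omega), if_pos rfl, add_zero]
    apply Finset.sum_congr rfl
    intro ℓ hℓ
    simp only [Finset.mem_Icc] at hℓ
    rw [if_neg (by omega)]
  rw [step1, step2]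
  ring

/-- The array `a_{m,i}` defined by the recurrence `a_{1,1} = 1`,
`a_{m,m} = 1 + a_{m-1,m-1}`, `a_{m,i} = a_{m-1,i-1} + i·a_{m-1,i}` for `1 ≤ i ≤ m-1`
(with `a_{m,0} = 0`) has the stated closed form. -/
theorem rgs_recurrence_closed_form (a : ℕ → ℕ → ℚ)
    (h0 : ∀ m : ℕ, a m 0 = 0)
    (h11 : a 1 1 = 1)
    (hdiag : ∀ m : ℕ, 2 ≤ m → a m m = 1 + a (m - 1) (m - 1))
    (hrec : ∀ m i : ℕ, 1 ≤ i → i ≤ m - 1 → a m i = a (m - 1) (i - 1) + i * a (m - 1) i) :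
    ∀ m i : ℕ, 1 ≤ i → i ≤ m →
      a m i = ∑ j ∈ Finset.Icc 1 i, ∑ ℓ ∈ Finset.Icc j i,
        (-1 : ℚ) ^ (i - ℓ) * ((i - j).choose (ℓ - j) : ℚ) * (ℓ : ℚ) ^ (m - j)
          / (i - j).factorial := by
  have adiag : ∀ m, 1 ≤ m → a m m = m := by
    intro m
    induction m with
    | zero => omega
    | succ m ih =>
      intro _
      rcases Nat.eq_zero_or_pos m with rfl | hm
      · simpa using h11
      · rw [hdiag (m+1) (by omega)]
        simp only [Nat.add_sub_cancel]
        rw [ih hm]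
        push_cast
        ring
  have main : ∀ m i, 1 ≤ i → i ≤ m → a m i = bb m i := by
    intro m
    induction m with
    | zero => intro i h1 h2; omega
    | succ m ih =>
      intro i h1 h2
      obtain ⟨i', rfl⟩ : ∃ i', i = i'+1 := ⟨i-1, by omega⟩
      rcases Nat.lt_or_ge (i'+1) (m+1) with hlt | hge
      · have hrec' := hrec (m+1) (i'+1) h1 (by omega)
        simp only [Nat.add_sub_cancel, Nat.succ_sub_one] at hrec'
        rw [hrec', bb_rec m i' (by omega)]
        have h2' : a m (i'+1) = bb m (i'+1) := ih (i'+1) (by omega) (by omega)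
        rcases Nat.eq_zero_or_pos i' with rfl | hp
        · rw [h0 m, bb_zero, h2']
          push_cast
          ring
        · rw [ih i' hp (by omega), h2']
          push_cast
          ring
      · have heq : i' = m := by omega
        subst heq
        rw [bb_diag]
        exact adiag (i'+1) (by omega)
  exact main
end

section
/- For integers n and j with 1 < j < n, the number of restricted growth sequences of length n having exactly j fixed points equals j·Θ_{n−j−1}(j), where Θ_m(t) := Σ_{ℓ=0}^{m} C(m,ℓ)·t^{m−ℓ}·B_ℓ; that is, |{π ∈ R_n : F_π = j}| = j · Σ_{ℓ=0}^{n−j−1} C(n−j−1, ℓ) · j^{n−j−1−ℓ} · B_ℓ. -/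
open Finset
open scoped Classical

/-! ### Extensions of an RGS prefix with current maximum `k` -/

def IsExt {m : ℕ} (k : ℕ) (τ : Fin m → ℕ) : Prop :=
  ∀ i : Fin m, 1 ≤ τ i ∧ τ i ≤ max ((Finset.univ.filter (fun j : Fin m => j < i)).sup τ) k + 1

noncomputable def ExtRGS (m k : ℕ) : Finset (Fin m → ℕ) :=
  (Fintype.piFinset fun _ : Fin m => Finset.Icc 1 (k + m)).filter (IsExt k)

lemma isExt_bound {m k : ℕ} {τ : Fin m → ℕ} (h : IsExt k τ) : ∀ i : Fin m, τ i ≤ k + i.val + 1 := by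
  have key : ∀ v : ℕ, ∀ i : Fin m, i.val = v → τ i ≤ k + i.val + 1 := by
    intro v
    induction v using Nat.strong_induction_on with
    | _ v ih =>
      intro i hv
      have h2 := (h i).2
      have hsup : ((Finset.univ.filter (fun j : Fin m => j < i)).sup τ) ≤ k + i.val := by
        apply Finset.sup_le
        intro b hb
        simp only [mem_filter] at hb
        have hb2 : b.val < i.val := hb.2
        have := ih b.val (by omega) b rfl
        omega
      omega
  exact fun i => key i.val i rfl

lemma mem_Ext {m k : ℕ} {τ : Fin m → ℕ} : τ ∈ ExtRGS m k ↔ IsExt k τ := by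
  constructor
  · exact fun h => (Finset.mem_filter.mp h).2
  · intro h
    refine Finset.mem_filter.mpr ⟨Fintype.mem_piFinset.mpr fun i => ?_, h⟩
    have h1 := (h i).1
    have h2 := isExt_bound h i
    have h3 : i.val < m := i.isLt
    exact Finset.mem_Icc.mpr ⟨h1, by omega⟩

lemma isRGS_iff_isExt {n : ℕ} (π : Fin n → ℕ) : IsRGS π ↔ IsExt 0 π := by
  unfold IsRGS IsExt
  simp

lemma RGS_eq_Ext (n : ℕ) : RGS n = ExtRGS n 0 := by
  unfold RGS ExtRGS
  rw [Nat.zero_add]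
  apply Finset.filter_congr
  intro x _
  exact isRGS_iff_isExt x

lemma mem_RGS {n : ℕ} {π : Fin n → ℕ} : π ∈ RGS n ↔ IsRGS π := by
  rw [RGS_eq_Ext, mem_Ext, isRGS_iff_isExt]


lemma isRGS_bound {n : ℕ} {π : Fin n → ℕ} (h : IsRGS π) : ∀ i : Fin n, π i ≤ i.val + 1 := by
  intro i
  have := isExt_bound ((isRGS_iff_isExt π).mp h) i
  omega

lemma sup_cons_succ {m : ℕ} (a : ℕ) (τ : Fin m → ℕ) (i : Fin m) :
    ((Finset.univ.filter (fun j : Fin (m+1) => j < i.succ)).sup (Fin.cons a τ))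
      = max a ((Finset.univ.filter (fun j : Fin m => j < i)).sup τ) := by
  apply le_antisymm
  · apply Finset.sup_le
    intro b hb
    simp only [mem_filter, mem_univ, true_and] at hb
    induction b using Fin.cases with
    | zero => simp
    | succ b' =>
      have hb' : b' < i := Fin.succ_lt_succ_iff.mp hb
      simp only [Fin.cons_succ]
      exact le_max_of_le_right (Finset.le_sup (by simp [hb']))
  · apply max_le
    · have h0 : (0 : Fin (m+1)) ∈ Finset.univ.filter (fun j : Fin (m+1) => j < i.succ) := by
        simp [Fin.succ_pos]
      simpa using Finset.le_sup (f := Fin.cons a τ) h0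
    · apply Finset.sup_le
      intro b hb
      simp only [mem_filter, mem_univ, true_and] at hb
      have : (Fin.cons a τ : Fin (m+1) → ℕ) b.succ = τ b := by simp
      rw [← this]
      exact Finset.le_sup (by simp [Fin.succ_lt_succ_iff, hb])

lemma sup_cons_zero {m : ℕ} (a : ℕ) (τ : Fin m → ℕ) :
    ((Finset.univ.filter (fun j : Fin (m+1) => j < 0)).sup (Fin.cons a τ)) = 0 := by
  have : (Finset.univ.filter (fun j : Fin (m+1) => j < 0)) = ∅ := by
    apply Finset.filter_eq_empty_iff.mpr
    intro j _
    exact Fin.not_lt_zero j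
  simp [this]

lemma isExt_cons {m k : ℕ} (a : ℕ) (τ : Fin m → ℕ) :
    IsExt k (Fin.cons a τ : Fin (m+1) → ℕ) ↔ (1 ≤ a ∧ a ≤ k + 1) ∧ IsExt (max a k) τ := by
  constructor
  · intro h
    refine ⟨?_, ?_⟩
    · have h0 := h 0
      rw [sup_cons_zero] at h0
      simpa using h0
    · intro i
      have hi := h i.succ
      rw [sup_cons_succ] at hi
      simp only [Fin.cons_succ] at hi
      refine ⟨hi.1, ?_⟩
      have := hi.2
      omega
  · rintro ⟨⟨ha1, ha2⟩, h⟩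
    intro i
    induction i using Fin.cases with
    | zero =>
      rw [sup_cons_zero]
      simpa using ⟨ha1, ha2⟩
    | succ i' =>
      rw [sup_cons_succ]
      simp only [Fin.cons_succ]
      have := h i'
      refine ⟨this.1, ?_⟩
      have := this.2
      omega

lemma Ext_zero_card (k : ℕ) : (ExtRGS 0 k).card = 1 := by
  rw [Finset.card_eq_one]
  refine ⟨fun i => i.elim0, ?_⟩
  ext f
  simp only [Finset.mem_singleton]
  constructor
  · intro _; funext i; exact i.elim0
  · intro h; subst h; rw [mem_Ext]; intro i; exact i.elim0

lemma Ext_card_succ (m k : ℕ) :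
    (ExtRGS (m+1) k).card = k * (ExtRGS m k).card + (ExtRGS m (k+1)).card := by
  have h1 : (ExtRGS (m+1) k).card
      = ((Finset.Icc 1 (k+1)).sigma (fun a => ExtRGS m (max a k))).card := by
    apply Finset.card_nbij' (fun π => ⟨π 0, Fin.tail π⟩) (fun p => Fin.cons p.1 p.2)
    · intro π hπ
      rw [Finset.mem_coe, mem_Ext] at hπ
      have h := (isExt_cons (π 0) (Fin.tail π)).mp (by rwa [Fin.cons_self_tail])
      simp only [Finset.mem_coe, Finset.mem_sigma, Finset.mem_Icc, mem_Ext]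
      exact ⟨⟨h.1.1, h.1.2⟩, h.2⟩
    · rintro ⟨a, τ⟩ hp
      simp only [Finset.mem_coe, Finset.mem_sigma, Finset.mem_Icc, mem_Ext] at hp
      rw [Finset.mem_coe, mem_Ext]
      exact (isExt_cons a τ).mpr ⟨hp.1, hp.2⟩
    · intro π _; exact Fin.cons_self_tail π
    · rintro ⟨a, τ⟩ _; simp
  rw [h1, Finset.card_sigma, Finset.sum_Icc_succ_top (Nat.le_add_left 1 k)]
  have h2 : ∀ a ∈ Finset.Icc 1 k, (ExtRGS m (max a k)).card = (ExtRGS m k).card := by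
    intro a ha
    rw [Finset.mem_Icc] at ha
    rw [max_eq_right ha.2]
  rw [Finset.sum_congr rfl h2, Finset.sum_const, Nat.card_Icc]
  simp [max_eq_left (Nat.le_succ k), Nat.mul_comm]

lemma inner_id (m r k : ℕ) (hr : r ≤ m) :
    ∑ s ∈ Finset.range (m+1), m.choose s * s.choose r * k^(m-s)
      = m.choose r * (k+1)^(m-r) := by
  rw [Finset.range_eq_Ico, ← Finset.sum_Ico_consecutive _ (Nat.zero_le r) (by omega)]
  have h1 : ∑ s ∈ Finset.Ico 0 r, m.choose s * s.choose r * k^(m-s) = 0 := by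
    apply Finset.sum_eq_zero
    intro s hs
    rw [Finset.mem_Ico] at hs
    rw [Nat.choose_eq_zero_of_lt hs.2]
    ring
  rw [h1, Nat.zero_add, Finset.sum_Ico_eq_sum_range]
  have h2 : m + 1 - r = (m - r) + 1 := by omega
  rw [h2]
  have h3 : ∀ d ∈ Finset.range (m - r + 1),
      m.choose (r + d) * (r + d).choose r * k ^ (m - (r + d))
        = m.choose r * ((m-r).choose d * k ^ ((m-r) - d)) := by
    intro d hd
    rw [Finset.mem_range] at hd
    rw [Nat.choose_mul (Nat.le_add_right r d)]
    have : (r + d) - r = d := by omega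
    rw [this]
    have : m - (r + d) = (m - r) - d := by omega
    rw [this]
    ring
  rw [Finset.sum_congr rfl h3, ← Finset.mul_sum]
  congr 1
  have := add_pow 1 k (m - r)
  simp only [one_pow, one_mul] at this
  rw [show k + 1 = 1 + k by omega, this]
  apply Finset.sum_congr rfl
  intro d hd
  rw [Nat.cast_id]; ring

lemma theta_rec (R : ℕ → ℕ) (m k : ℕ)
    (hR : ∀ s, s ≤ m → R (s+1) = ∑ r ∈ Finset.range (s+1), s.choose r * R r) :
    ∑ ℓ ∈ Finset.range (m+2), (m+1).choose ℓ * k^(m+1-ℓ) * R ℓ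
      = k * ∑ ℓ ∈ Finset.range (m+1), m.choose ℓ * k^(m-ℓ) * R ℓ
        + ∑ ℓ ∈ Finset.range (m+1), m.choose ℓ * (k+1)^(m-ℓ) * R ℓ := by
  rw [Finset.sum_range_succ' (fun ℓ => (m+1).choose ℓ * k^(m+1-ℓ) * R ℓ) (m+1)]
  have hsplit : ∀ ℓ ∈ Finset.range (m+1),
      (m+1).choose (ℓ+1) * k^(m+1-(ℓ+1)) * R (ℓ+1)
        = m.choose ℓ * k^(m-ℓ) * R (ℓ+1) + m.choose (ℓ+1) * k^(m-ℓ) * R (ℓ+1) := by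
    intro ℓ hℓ
    rw [Nat.choose_succ_succ]
    have h : m + 1 - (ℓ+1) = m - ℓ := by omega
    rw [h]
    ring
  rw [Finset.sum_congr rfl hsplit, Finset.sum_add_distrib]
  have hk : k * ∑ ℓ ∈ Finset.range (m+1), m.choose ℓ * k^(m-ℓ) * R ℓ
      = (∑ ℓ ∈ Finset.range (m+1), m.choose (ℓ+1) * k^(m-ℓ) * R (ℓ+1))
        + (m+1).choose 0 * k^(m+1-0) * R 0 := by
    rw [Finset.mul_sum, Finset.sum_range_succ' (fun ℓ => k * (m.choose ℓ * k^(m-ℓ) * R ℓ)) m]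
    congr 1
    · rw [Finset.sum_range_succ, Nat.choose_succ_self, Nat.zero_mul, Nat.zero_mul, Nat.add_zero]
      apply Finset.sum_congr rfl
      intro x hx
      rw [Finset.mem_range] at hx
      have h4 : m - x = (m - (x+1)) + 1 := by omega
      rw [h4, pow_succ]
      ring
    · simp only [Nat.choose_zero_right, Nat.one_mul, Nat.sub_zero]
      rw [pow_succ]
      ring
  rw [hk]
  have hA : ∑ ℓ ∈ Finset.range (m+1), m.choose ℓ * k^(m-ℓ) * R (ℓ+1)
      = ∑ ℓ ∈ Finset.range (m+1), m.choose ℓ * (k+1)^(m-ℓ) * R ℓ := by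
    have step1 : ∀ ℓ ∈ Finset.range (m+1),
        m.choose ℓ * k^(m-ℓ) * R (ℓ+1)
          = ∑ r ∈ Finset.range (m+1), m.choose ℓ * k^(m-ℓ) * (ℓ.choose r * R r) := by
      intro ℓ hℓ
      rw [Finset.mem_range] at hℓ
      rw [hR ℓ (by omega), Finset.mul_sum]
      apply Finset.sum_subset (Finset.range_subset_range.mpr (by omega : ℓ+1 ≤ m+1))
      intro x _ hx2
      rw [Finset.mem_range] at hx2
      rw [Nat.choose_eq_zero_of_lt (show ℓ < x by omega)]
      ring
    rw [Finset.sum_congr rfl step1, Finset.sum_comm]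
    apply Finset.sum_congr rfl
    intro r hr
    rw [Finset.mem_range] at hr
    have h5 : ∀ ℓ ∈ Finset.range (m+1), m.choose ℓ * k^(m-ℓ) * (ℓ.choose r * R r)
        = (m.choose ℓ * ℓ.choose r * k^(m-ℓ)) * R r := by intro ℓ _; ring
    rw [Finset.sum_congr rfl h5, ← Finset.sum_mul, inner_id m r k (by omega)]
  rw [hA]
  ring

lemma RGS_card_succ (s : ℕ) : (RGS (s+1)).card = (ExtRGS s 1).card := by
  rw [RGS_eq_Ext, Ext_card_succ]
  simp

lemma Ext_card : ∀ m k : ℕ, (ExtRGS m k).card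
    = ∑ ℓ ∈ Finset.range (m + 1), m.choose ℓ * k ^ (m - ℓ) * (RGS ℓ).card := by
  intro m
  induction m using Nat.strong_induction_on with
  | _ m ih =>
    match m with
    | 0 =>
      intro k
      rw [Ext_zero_card]
      simp [RGS_eq_Ext, Ext_zero_card]
    | (m+1) =>
      intro k
      rw [Ext_card_succ, ih m (by omega) k, ih m (by omega) (k+1)]
      have hRfact : ∀ s, s ≤ m →
          (RGS (s+1)).card = ∑ r ∈ Finset.range (s+1), s.choose r * (RGS r).card := by
        intro s hs
        rw [RGS_card_succ, ih s (by omega) 1]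
        apply Finset.sum_congr rfl
        intro r _
        simp
      rw [show m+1+1 = m+2 from rfl, theta_rec _ m k hRfact]

lemma fix_downward {n : ℕ} {π : Fin n → ℕ} (h : IsRGS π) :
    ∀ i : Fin n, π i = i.val + 1 → ∀ i' : Fin n, i' ≤ i → π i' = i'.val + 1 := by
  have key : ∀ v : ℕ, ∀ i : Fin n, i.val = v → π i = i.val + 1 →
      ∀ i' : Fin n, i' ≤ i → π i' = i'.val + 1 := by
    intro v
    induction v using Nat.strong_induction_on with
    | _ v ih =>
      intro i hv hfix i' hle
      rcases eq_or_lt_of_le hle with heq | hlt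
      · subst heq; exact hfix
      -- i' < i, so i.val ≥ 1
      have hi1 : 1 ≤ i.val := by
        have : i'.val < i.val := hlt
        omega
      -- sup over predecessors ≥ i.val
      have hsup : (i.val : ℕ) ≤ (Finset.univ.filter (fun j : Fin n => j < i)).sup π := by
        have h2 := (h i).2
        omega
      obtain ⟨b, hb, hbe⟩ := (Finset.le_sup_iff (by omega : (0:ℕ) < i.val)).mp hsup
      simp only [Finset.mem_filter, Finset.mem_univ, true_and] at hb
      have hb2 : b.val < i.val := hb
      have hb3 : π b ≤ b.val + 1 := isRGS_bound h b
      -- so b.val + 1 = i.val and π b = b.val + 1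
      have hb4 : b.val + 1 = i.val := by omega
      have hb5 : π b = b.val + 1 := by omega
      -- i' ≤ b since i' < i
      have hi'b : i' ≤ b := by
        have : i'.val < i.val := hlt
        exact Fin.le_def.mpr (by omega)
      exact ih b.val (by omega) b rfl hb5 i' hi'b
  exact fun i => key i.val i rfl

lemma downward_card {n : ℕ} {S : Finset (Fin n)}
    (h : ∀ i ∈ S, ∀ i', i' ≤ i → i' ∈ S) (i : Fin n) : i ∈ S ↔ i.val < S.card := by
  constructor
  · intro hi
    have hsub : Finset.Iic i ⊆ S := fun x hx => h i hi x (Finset.mem_Iic.mp hx)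
    have := Finset.card_le_card hsub
    rw [Fin.card_Iic] at this
    omega
  · intro hi
    by_contra hni
    have hsub : S ⊆ Finset.Iio i := by
      intro x hx
      rw [Finset.mem_Iio]
      by_contra hxi
      exact hni (h x hx i (le_of_not_gt hxi))
    have := Finset.card_le_card hsub
    rw [Fin.card_Iio] at this
    omega

lemma fixCount_eq_iff {n j : ℕ} (hjn : j ≤ n) {π : Fin n → ℕ} (h : IsRGS π) :
    fixCount π = j ↔ ∀ i : Fin n, (π i = i.val + 1 ↔ i.val < j) := by
  have hdc : ∀ i ∈ (Finset.univ.filter (fun i : Fin n => π i = (i : ℕ) + 1)),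
      ∀ i', i' ≤ i → i' ∈ (Finset.univ.filter (fun i : Fin n => π i = (i : ℕ) + 1)) := by
    intro i hi i' hle
    simp only [Finset.mem_filter, Finset.mem_univ, true_and] at hi ⊢
    exact fix_downward h i hi i' hle
  constructor
  · intro hc i
    have := downward_card hdc i
    simp only [Finset.mem_filter, Finset.mem_univ, true_and] at this
    rw [this, fixCount] at *
    rw [hc]
  · intro hiff
    have hset : (Finset.univ.filter (fun i : Fin n => π i = (i : ℕ) + 1))
        = Finset.univ.filter (fun i : Fin n => i.val < j) := by
      apply Finset.filter_congr
      intro i _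
      simp [hiff i]
    rw [fixCount, hset]
    rcases Nat.eq_zero_or_pos n with rfl | hn
    · have : j = 0 := by omega
      subst this
      simp
    have hcr : (Finset.univ.filter (fun i : Fin n => i.val < j)).card = (Finset.range j).card := by
      apply Finset.card_nbij' (fun i => i.val) (fun r => ⟨r % n, Nat.mod_lt r (by omega)⟩)
          (fun i hi => by simp only [Finset.mem_coe, Finset.mem_filter] at hi; exact Finset.mem_range.mpr hi.2)
      · intro r hr
        rw [Finset.mem_coe, Finset.mem_range] at hr
        simp only [Finset.mem_coe, Finset.mem_filter, Finset.mem_univ, true_and]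
        have : r % n = r := Nat.mod_eq_of_lt (by omega)
        simp [this]; omega
      · intro i hi
        simp only [Finset.mem_coe, Finset.mem_filter, Finset.mem_univ, true_and] at hi
        apply Fin.ext
        simp [Nat.mod_eq_of_lt i.isLt]
      · intro r hr
        rw [Finset.mem_coe, Finset.mem_range] at hr
        simp [Nat.mod_eq_of_lt (show r < n by omega)]
    rw [hcr, Finset.card_range]

def decfun (j m a : ℕ) (τ : Fin m → ℕ) : Fin (j+1+m) → ℕ := fun i =>
  if h1 : i.val < j then i.val + 1
  else if h2 : i.val = j then a
  else τ ⟨i.val - (j+1), by omega⟩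

lemma decfun_lt {j m a : ℕ} {τ : Fin m → ℕ} {i : Fin (j+1+m)} (h : i.val < j) :
    decfun j m a τ i = i.val + 1 := dif_pos h

lemma decfun_eq {j m a : ℕ} {τ : Fin m → ℕ} {i : Fin (j+1+m)} (h : i.val = j) :
    decfun j m a τ i = a := by
  unfold decfun
  rw [dif_neg (by omega), dif_pos h]

lemma decfun_gt {j m a : ℕ} {τ : Fin m → ℕ} {i : Fin (j+1+m)} (h : j < i.val) :
    decfun j m a τ i = τ ⟨i.val - (j+1), by omega⟩ := by
  unfold decfun
  rw [dif_neg (by omega), dif_neg (by omega)]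

/-- For `1 < j < n`, the number of RGS of length `n` with exactly `j` fixed
points equals `j · Θ_{n-j-1}(j) = j · Σ_{ℓ=0}^{n-j-1} C(n-j-1, ℓ) j^{n-j-1-ℓ} B_ℓ`. -/
theorem rgs_count_j_fixed_points (n j : ℕ) (hj : 1 < j) (hjn : j < n) :
    ((RGS n).filter (fun π => fixCount π = j)).card
      = j * ∑ ℓ ∈ Finset.range (n - j - 1 + 1),
          (n - j - 1).choose ℓ * j ^ (n - j - 1 - ℓ) * (RGS ℓ).card := by
  obtain ⟨m, rfl⟩ : ∃ m, n = j + 1 + m := ⟨n - j - 1, by omega⟩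
  have hmm : j + 1 + m - j - 1 = m := by omega
  rw [hmm, ← Ext_card m j]
  have hcard : j * (ExtRGS m j).card = (Finset.Icc 1 j ×ˢ ExtRGS m j).card := by
    rw [Finset.card_product, Nat.card_Icc, Nat.add_sub_cancel]
  rw [hcard]
  apply Finset.card_nbij'
    (fun π => ((π ⟨j, by omega⟩, fun t : Fin m => π ⟨j+1+t.val, by omega⟩) : ℕ × (Fin m → ℕ)))
    (fun p => decfun j m p.1 p.2)
  · -- enc maps into product
    intro π hπ
    rw [Finset.mem_coe, Finset.mem_filter] at hπ
    obtain ⟨hπ1, hπ2⟩ := hπ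
    have hR : IsRGS π := mem_RGS.mp hπ1
    have hfix : ∀ i : Fin (j+1+m), (π i = i.val + 1 ↔ i.val < j) :=
      (fixCount_eq_iff (by omega) hR).mp hπ2
    refine Finset.mem_product.mpr ⟨Finset.mem_Icc.mpr ⟨?_, ?_⟩, mem_Ext.mpr ?_⟩
    · exact (hR ⟨j, by omega⟩).1
    · show π ⟨j, by omega⟩ ≤ j
      have hb := isRGS_bound hR ⟨j, by omega⟩
      have hne : ¬ (π ⟨j, by omega⟩ = j + 1) := by
        intro hc
        have := (hfix ⟨j, by omega⟩).mp hc
        simp at this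
      simp only [Fin.val_mk] at hb hne ⊢
      omega
    · show IsExt j (fun t : Fin m => π ⟨j+1+t.val, by omega⟩)
      intro t
      have hsup : ((Finset.univ.filter
            (fun b : Fin (j+1+m) => b < (⟨j+1+t.val, by omega⟩ : Fin (j+1+m)))).sup π)
          ≤ max ((Finset.univ.filter (fun t' : Fin m => t' < t)).sup
              (fun t' : Fin m => π ⟨j+1+t'.val, by omega⟩)) j := by
        apply Finset.sup_le
        intro b hb
        simp only [Finset.mem_filter, Finset.mem_univ, true_and, Fin.lt_def,
          Fin.val_mk] at hb
        by_cases hc1 : b.val < j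
        · have hfb : π b = b.val + 1 := (hfix b).mpr hc1
          omega
        · by_cases hc2 : b.val = j
          · have hble := isRGS_bound hR b
            have hne : ¬ (π b = b.val + 1) := fun hc => hc1 ((hfix b).mp hc)
            omega
          · have hbv : j + 1 ≤ b.val := by omega
            have hmem : (⟨b.val-(j+1), by omega⟩ : Fin m)
                ∈ Finset.univ.filter (fun t' : Fin m => t' < t) := by
              simp only [Finset.mem_filter, Finset.mem_univ, true_and, Fin.lt_def,
                Fin.val_mk]
              omega
            have hle := Finset.le_sup
              (f := fun t' : Fin m => π ⟨j+1+t'.val, by omega⟩) hmem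
            have hbeq : (⟨j+1+(b.val-(j+1)), by omega⟩ : Fin (j+1+m)) = b := by
              apply Fin.ext; simp only [Fin.val_mk]; omega
            simp only [Fin.val_mk] at hle
            rw [hbeq] at hle
            exact le_max_of_le_left hle
      exact ⟨(hR ⟨j+1+t.val, by omega⟩).1,
        le_trans (hR ⟨j+1+t.val, by omega⟩).2 (Nat.add_le_add_right hsup 1)⟩
  · -- dec maps into filtered RGS
    rintro ⟨a, τ⟩ hp
    rw [Finset.mem_coe, Finset.mem_product, Finset.mem_Icc, mem_Ext] at hp
    obtain ⟨⟨ha1, ha2⟩, hτ⟩ := hp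
    dsimp only at ha1 ha2 hτ ⊢
    have hjsup : ∀ i : Fin (j+1+m), j ≤ i.val →
        j ≤ (Finset.univ.filter (fun b : Fin (j+1+m) => b < i)).sup (decfun j m a τ) := by
      intro i hi
      have hmem : (⟨j-1, by omega⟩ : Fin (j+1+m))
          ∈ Finset.univ.filter (fun b : Fin (j+1+m) => b < i) := by
        simp only [Finset.mem_filter, Finset.mem_univ, true_and, Fin.lt_def, Fin.val_mk]
        omega
      have hle := Finset.le_sup (f := decfun j m a τ) hmem
      rw [decfun_lt (by simp only [Fin.val_mk]; omega)] at hle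
      simp only [Fin.val_mk] at hle
      omega
    have hRGS : IsRGS (decfun j m a τ) := by
      intro i
      by_cases hc1 : i.val < j
      · rw [decfun_lt hc1]
        refine ⟨by omega, ?_⟩
        rcases Nat.eq_zero_or_pos i.val with h0 | h0
        · omega
        · have hmem : (⟨i.val-1, by omega⟩ : Fin (j+1+m))
              ∈ Finset.univ.filter (fun b : Fin (j+1+m) => b < i) := by
            simp only [Finset.mem_filter, Finset.mem_univ, true_and, Fin.lt_def, Fin.val_mk]
            omega
          have hle := Finset.le_sup (f := decfun j m a τ) hmem
          rw [decfun_lt (by simp only [Fin.val_mk]; omega)] at hle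
          simp only [Fin.val_mk] at hle
          omega
      · by_cases hc2 : i.val = j
        · rw [decfun_eq hc2]
          have := hjsup i (by omega)
          exact ⟨by omega, by omega⟩
        · rw [decfun_gt (by omega)]
          have hsupτ : ((Finset.univ.filter
                (fun t' : Fin m => t' < (⟨i.val - (j+1), by omega⟩ : Fin m))).sup τ)
              ≤ (Finset.univ.filter (fun b : Fin (j+1+m) => b < i)).sup (decfun j m a τ) := by
            apply Finset.sup_le
            intro t' ht'
            simp only [Finset.mem_filter, Finset.mem_univ, true_and, Fin.lt_def,
              Fin.val_mk] at ht'
            have hmem : (⟨j+1+t'.val, by omega⟩ : Fin (j+1+m))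
                ∈ Finset.univ.filter (fun b : Fin (j+1+m) => b < i) := by
              simp only [Finset.mem_filter, Finset.mem_univ, true_and, Fin.lt_def, Fin.val_mk]
              omega
            have hle := Finset.le_sup (f := decfun j m a τ) hmem
            rw [decfun_gt (by simp only [Fin.val_mk]; omega)] at hle
            have heq : (⟨(⟨j+1+t'.val, by omega⟩ : Fin (j+1+m)).val - (j+1), by omega⟩ : Fin m) = t' := by
              apply Fin.ext; simp only [Fin.val_mk]; omega
            rw [heq] at hle
            exact hle
          exact ⟨(hτ _).1,
            le_trans (hτ ⟨i.val - (j+1), by omega⟩).2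
              (Nat.add_le_add_right (max_le hsupτ (hjsup i (by omega))) 1)⟩
    rw [Finset.mem_coe, Finset.mem_filter]
    refine ⟨mem_RGS.mpr hRGS, ?_⟩
    rw [fixCount_eq_iff (by omega) hRGS]
    intro i
    constructor
    · intro hfi
      by_contra hc1
      by_cases hc2 : i.val = j
      · rw [decfun_eq hc2] at hfi
        omega
      · rw [decfun_gt (by omega)] at hfi
        have := isExt_bound hτ ⟨i.val - (j+1), by omega⟩
        simp only [Fin.val_mk] at this
        omega
    · intro hfi
      rw [decfun_lt hfi]
  · -- dec ∘ enc = id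
    intro π hπ
    rw [Finset.mem_coe, Finset.mem_filter] at hπ
    obtain ⟨hπ1, hπ2⟩ := hπ
    have hR : IsRGS π := mem_RGS.mp hπ1
    have hfix : ∀ i : Fin (j+1+m), (π i = i.val + 1 ↔ i.val < j) :=
      (fixCount_eq_iff (by omega) hR).mp hπ2
    funext i
    show decfun j m (π ⟨j, by omega⟩) (fun t : Fin m => π ⟨j+1+t.val, by omega⟩) i = π i
    by_cases hc1 : i.val < j
    · rw [decfun_lt hc1]
      exact ((hfix i).mpr hc1).symm
    · by_cases hc2 : i.val = j
      · rw [decfun_eq hc2]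
        congr 1
        exact (Fin.ext hc2.symm : (⟨j, by omega⟩ : Fin (j+1+m)) = i)
      · rw [decfun_gt (by omega)]
        congr 1
        apply Fin.ext
        simp only [Fin.val_mk]
        omega
  · -- enc ∘ dec = id
    rintro ⟨a, τ⟩ hp
    dsimp only
    refine Prod.ext ?_ ?_
    · show decfun j m a τ ⟨j, by omega⟩ = a
      exact decfun_eq rfl
    · funext t
      show decfun j m a τ ⟨j+1+t.val, by omega⟩ = τ t
      rw [decfun_gt (by simp only [Fin.val_mk]; omega)]
      congr 1
      apply Fin.ext
      simp only [Fin.val_mk]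
      omega
end

section
/- For every integer n ≥ 2, the total number of fixed points over all restricted growth sequences of length n satisfies Σ_{π ∈ R_n} F_π = n + Σ_{j=1}^{n−1} j² · Θ_{n−j−1}(j), where Θ_m(t) := Σ_{ℓ=0}^{m} C(m,ℓ)·t^{m−ℓ}·B_ℓ. Equivalently, the expected number of fixed points of a uniformly random RGS of length n equals (n + Σ_{j=1}^{n−1} j²·Θ_{n−j−1}(j)) / B_n. -/
open Finset
open scoped Classical

/-! ### Auxiliary development -/

/-- growth condition with starting threshold `t` -/
def scond (t : ℕ) {m : ℕ} (f : Fin m → ℕ) : Prop :=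
  ∀ i : Fin m, 1 ≤ f i ∧ f i ≤ ((Finset.univ.filter (fun j : Fin m => j < i)).sup f ⊔ t) + 1

noncomputable def Sset (m t : ℕ) : Finset (Fin m → ℕ) :=
  (Fintype.piFinset fun _ : Fin m => Finset.Icc 1 (t + m)).filter (scond t)

lemma scond_entry_bound {m t : ℕ} {f : Fin m → ℕ} (hf : scond t f) (i : Fin m) :
    f i ≤ t + i.1 + 1 := by
  have H : ∀ k : ℕ, ∀ i : Fin m, i.1 ≤ k → f i ≤ t + i.1 + 1 := by
    intro k
    induction k with
    | zero =>
      intro i hi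
      have hemp : (Finset.univ.filter (fun j : Fin m => j < i)) = ∅ := by
        apply Finset.filter_eq_empty_iff.mpr
        intro j _
        intro hj
        have hj' : j.1 < i.1 := hj
        omega
      have h2 := (hf i).2
      rw [hemp] at h2
      simp only [Finset.sup_empty, bot_sup_eq] at h2
      omega
    | succ k IH =>
      intro i hi
      have hsup : (Finset.univ.filter (fun j : Fin m => j < i)).sup f ≤ t + i.1 := by
        apply Finset.sup_le
        intro j hj
        have hji : j < i := (Finset.mem_filter.mp hj).2
        have hji' : j.1 < i.1 := hji
        have := IH j (by omega)
        omega
      have h3 : ((Finset.univ.filter (fun j : Fin m => j < i)).sup f ⊔ t) ≤ t + i.1 :=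
        sup_le hsup (by omega)
      have h2 := (hf i).2
      omega
  exact H i.1 i le_rfl

lemma mem_Sset {m t : ℕ} {f : Fin m → ℕ} : f ∈ Sset m t ↔ scond t f := by
  constructor
  · exact fun h => (Finset.mem_filter.mp h).2
  · intro h
    refine Finset.mem_filter.mpr
      ⟨Fintype.mem_piFinset.mpr fun i => Finset.mem_Icc.mpr ⟨(h i).1, ?_⟩, h⟩
    have h1 := scond_entry_bound h i
    have h2 := i.2
    omega

lemma filter_lt_zero_empty {m : ℕ} :
    (Finset.univ.filter fun j : Fin (m+1) => j < (0 : Fin (m+1))) = ∅ := by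
  apply Finset.filter_eq_empty_iff.mpr
  intro j _
  intro hj
  have hj' : j.1 < (0 : Fin (m+1)).1 := hj
  simp at hj'

lemma sup_lt_succ {m : ℕ} (f : Fin (m+1) → ℕ) (i : Fin m) :
    (Finset.univ.filter fun j : Fin (m+1) => j < i.succ).sup f
      = f 0 ⊔ (Finset.univ.filter fun j : Fin m => j < i).sup (Fin.tail f) := by
  apply le_antisymm
  · apply Finset.sup_le
    intro j hj
    have hj' : j < i.succ := (Finset.mem_filter.mp hj).2
    cases j using Fin.cases with
    | zero => exact le_sup_left
    | succ k =>
      have hk : k < i := by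
        have h1 : k.succ.1 < i.succ.1 := hj'
        simp only [Fin.val_succ] at h1
        exact Fin.lt_def.mpr (by omega)
      have h2 : Fin.tail f k ≤ (Finset.univ.filter fun j : Fin m => j < i).sup (Fin.tail f) :=
        Finset.le_sup (Finset.mem_filter.mpr ⟨Finset.mem_univ _, hk⟩)
      exact le_trans h2 le_sup_right
  · refine sup_le ?_ ?_
    · refine Finset.le_sup (Finset.mem_filter.mpr ⟨Finset.mem_univ _, ?_⟩)
      exact Fin.lt_def.mpr (by simp [Fin.val_succ])
    · apply Finset.sup_le
      intro k hk
      have hk' : k < i := (Finset.mem_filter.mp hk).2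
      exact Finset.le_sup (f := f)
        (Finset.mem_filter.mpr ⟨Finset.mem_univ _, Fin.succ_lt_succ_iff.mpr hk'⟩)

lemma scond_cons_iff {m t : ℕ} (f : Fin (m+1) → ℕ) :
    scond t f ↔ (1 ≤ f 0 ∧ f 0 ≤ t + 1) ∧ scond (t ⊔ f 0) (Fin.tail f) := by
  constructor
  · intro hf
    have h0 := hf 0
    rw [filter_lt_zero_empty] at h0
    simp only [Finset.sup_empty, bot_sup_eq] at h0
    refine ⟨⟨h0.1, h0.2⟩, ?_⟩
    intro i
    have hi := hf i.succ
    rw [sup_lt_succ] at hi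
    refine ⟨hi.1, ?_⟩
    have h2 := hi.2
    have heq : (f 0 ⊔ (Finset.univ.filter fun j : Fin m => j < i).sup (Fin.tail f)) ⊔ t
        = ((Finset.univ.filter fun j : Fin m => j < i).sup (Fin.tail f)) ⊔ (t ⊔ f 0) := by
      rw [sup_comm (f 0), sup_assoc, sup_comm t (f 0)]
    rw [heq] at h2
    exact h2
  · rintro ⟨⟨h01, h02⟩, hg⟩
    intro i
    cases i using Fin.cases with
    | zero =>
      rw [filter_lt_zero_empty]
      simp only [Finset.sup_empty, bot_sup_eq]
      exact ⟨h01, by omega⟩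
    | succ k =>
      have hk := hg k
      rw [sup_lt_succ]
      refine ⟨hk.1, ?_⟩
      have h2 := hk.2
      have heq : (f 0 ⊔ (Finset.univ.filter fun j : Fin m => j < k).sup (Fin.tail f)) ⊔ t
          = ((Finset.univ.filter fun j : Fin m => j < k).sup (Fin.tail f)) ⊔ (t ⊔ f 0) := by
        rw [sup_comm (f 0), sup_assoc, sup_comm t (f 0)]
      rw [heq]
      exact h2

/-- the recursive count -/
def Nrec : ℕ → ℕ → ℕ
  | 0, _ => 1
  | (m+1), t => t * Nrec m t + Nrec m (t+1)

lemma Sset_zero (t : ℕ) : (Sset 0 t).card = 1 := by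
  have h : Sset 0 t = {finZeroElim} := by
    ext f
    simp only [mem_Sset, Finset.mem_singleton]
    constructor
    · intro _
      funext i
      exact i.elim0
    · intro _
      intro i
      exact i.elim0
  rw [h, Finset.card_singleton]

lemma card_Sset : ∀ (m t : ℕ), (Sset m t).card = Nrec m t := by
  intro m
  induction m with
  | zero => intro t; simpa [Nrec] using Sset_zero t
  | succ m IH =>
    intro t
    have hbij : (Sset (m+1) t).card
        = ((Finset.Icc 1 (t+1)).sigma fun a => Sset m (t ⊔ a)).card := by
      refine Finset.card_nbij' (fun f => (⟨f 0, Fin.tail f⟩ : (_ : ℕ) × (Fin m → ℕ)))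
        (fun x => Fin.cons x.1 x.2) ?_ ?_ ?_ ?_
      · intro f hf
        rw [Finset.mem_coe, mem_Sset, scond_cons_iff] at hf
        simp only [Finset.mem_coe, Finset.mem_sigma]
        exact ⟨Finset.mem_Icc.mpr ⟨hf.1.1, hf.1.2⟩, mem_Sset.mpr hf.2⟩
      · intro x hx
        simp only [Finset.mem_coe, Finset.mem_sigma] at hx
        rw [Finset.mem_coe, mem_Sset, scond_cons_iff]
        have h1 := Finset.mem_Icc.mp hx.1
        constructor
        · simpa using h1
        · simp only [Fin.cons_zero, Fin.tail_cons]
          exact mem_Sset.mp hx.2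
      · intro f _
        exact Fin.cons_self_tail f
      · intro x _
        obtain ⟨a, g⟩ := x
        simp
    rw [hbij, Finset.card_sigma]
    have hins : Finset.Icc 1 (t+1) = insert (t+1) (Finset.Icc 1 t) := by
      ext a
      simp only [Finset.mem_Icc, Finset.mem_insert]
      omega
    rw [hins, Finset.sum_insert (by simp)]
    have h1 : t ⊔ (t+1) = t + 1 := sup_eq_right.mpr (by omega)
    rw [h1, IH]
    have hsum : ∀ a ∈ Finset.Icc 1 t, (Sset m (t ⊔ a)).card = Nrec m t := by
      intro a ha
      have h2 : t ⊔ a = t := sup_eq_left.mpr (Finset.mem_Icc.mp ha).2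
      rw [h2, IH]
    rw [Finset.sum_congr rfl hsum, Finset.sum_const, Nat.card_Icc]
    show Nrec m (t+1) + (t + 1 - 1) * Nrec m t = Nrec (m+1) t
    have h3 : t + 1 - 1 = t := by omega
    rw [h3]
    show Nrec m (t+1) + t * Nrec m t = t * Nrec m t + Nrec m (t+1)
    omega

/-- identity prefix (shifted by `t`) -/
def idpfx (t p : ℕ) {m : ℕ} (f : Fin m → ℕ) : Prop :=
  ∀ j : Fin m, (j : ℕ) < p → f j = t + (j : ℕ) + 1

lemma card_pfx : ∀ (p m t : ℕ), p ≤ m →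
    ((Sset m t).filter (idpfx t p)).card = Nrec (m - p) (t + p) := by
  intro p
  induction p with
  | zero =>
    intro m t _
    have h : (Sset m t).filter (idpfx t 0) = Sset m t :=
      Finset.filter_true_of_mem (fun f _ => fun j hj => absurd hj (by omega))
    rw [h, card_Sset]
    norm_num
  | succ p IH =>
    intro m t hpm
    obtain ⟨m', rfl⟩ : ∃ m', m = m' + 1 := ⟨m - 1, by omega⟩
    have hbij : ((Sset (m'+1) t).filter (idpfx t (p+1))).card
        = ((Sset m' (t+1)).filter (idpfx (t+1) p)).card := by
      refine Finset.card_nbij' (fun f => Fin.tail f) (fun g => Fin.cons (t+1) g)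
        ?_ ?_ ?_ ?_
      · intro f hf
        obtain ⟨hfS, hfp⟩ := Finset.mem_filter.mp hf
        rw [mem_Sset, scond_cons_iff] at hfS
        have hf0 : f 0 = t + 1 := by
          have h := hfp 0 (by simp)
          simpa using h
        refine Finset.mem_filter.mpr ⟨mem_Sset.mpr ?_, ?_⟩
        · have h := hfS.2
          rwa [hf0, sup_eq_right.mpr (by omega : t ≤ t + 1)] at h
        · intro j hj
          have h := hfp j.succ (by simp only [Fin.val_succ]; omega)
          simp only [Fin.val_succ] at h
          show f j.succ = t + 1 + (j : ℕ) + 1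
          omega
      · intro g hg
        obtain ⟨hgS, hgp⟩ := Finset.mem_filter.mp hg
        refine Finset.mem_filter.mpr ⟨mem_Sset.mpr ?_, ?_⟩
        · rw [scond_cons_iff]
          refine ⟨by simp, ?_⟩
          simp only [Fin.cons_zero, Fin.tail_cons]
          rw [sup_eq_right.mpr (by omega : t ≤ t + 1)]
          exact mem_Sset.mp hgS
        · intro j hj
          cases j using Fin.cases with
          | zero => simp
          | succ k =>
            simp only [Fin.cons_succ]
            have hk : (k : ℕ) < p := by
              have := hj
              simp only [Fin.val_succ] at this
              omega
            have h := hgp k hk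
            simp only [Fin.val_succ]
            omega
      · intro f hf
        obtain ⟨_, hfp⟩ := Finset.mem_filter.mp hf
        have hf0 : f 0 = t + 1 := by
          have h := hfp 0 (by simp)
          simpa using h
        rw [← hf0]
        exact Fin.cons_self_tail f
      · intro g _
        exact Fin.tail_cons _ _
    rw [hbij, IH m' (t+1) (by omega)]
    have e1 : m' + 1 - (p+1) = m' - p := by omega
    have e2 : t + 1 + p = t + (p+1) := by omega
    rw [e1, e2]

lemma isRGS_iff_scond {n : ℕ} (f : Fin n → ℕ) : IsRGS f ↔ scond 0 f := by
  constructor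
  · intro h i
    obtain ⟨h1, h2⟩ := h i
    refine ⟨h1, ?_⟩
    rwa [sup_eq_left.mpr (Nat.zero_le _)]
  · intro h i
    obtain ⟨h1, h2⟩ := h i
    refine ⟨h1, ?_⟩
    rwa [sup_eq_left.mpr (Nat.zero_le _)] at h2

lemma RGS_eq_Sset (n : ℕ) : RGS n = Sset n 0 := by
  ext f
  rw [mem_Sset]
  constructor
  · intro hf
    exact (isRGS_iff_scond f).mp (Finset.mem_filter.mp hf).2
  · intro hf
    refine Finset.mem_filter.mpr
      ⟨Fintype.mem_piFinset.mpr fun i => Finset.mem_Icc.mpr ⟨(hf i).1, ?_⟩,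
        (isRGS_iff_scond f).mpr hf⟩
    have h1 := scond_entry_bound hf i
    have h2 := i.2
    omega

lemma fix_iff {n : ℕ} {f : Fin n → ℕ} (hf : scond 0 f) (i : Fin n) :
    f i = (i : ℕ) + 1 ↔ ∀ j : Fin n, (j : ℕ) ≤ (i : ℕ) → f j = (j : ℕ) + 1 := by
  constructor
  · have key : ∀ k : ℕ, ∀ i : Fin n, i.1 = k → f i = i.1 + 1 →
        ∀ j : Fin n, j.1 ≤ i.1 → f j = j.1 + 1 := by
      intro k
      induction k using Nat.strong_induction_on with
      | _ k IHk =>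
        intro i hik hfi j hji
        rcases eq_or_lt_of_le hji with heq | hlt
        · have hj : j = i := Fin.ext heq
          rw [hj]
          exact hfi
        · have hi1 : 1 ≤ i.1 := by omega
          have hne : (Finset.univ.filter (fun j : Fin n => j < i)).Nonempty := by
            refine ⟨⟨0, lt_of_le_of_lt (Nat.zero_le _) i.2⟩, ?_⟩
            refine Finset.mem_filter.mpr ⟨Finset.mem_univ _, ?_⟩
            exact Fin.lt_def.mpr (by show 0 < i.1; omega)
          obtain ⟨j₀, hj₀s, hj₀⟩ :=
            Finset.exists_mem_eq_sup (Finset.univ.filter (fun j : Fin n => j < i)) hne f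
          have hj₀i : j₀.1 < i.1 := (Finset.mem_filter.mp hj₀s).2
          have hsup : i.1 ≤ (Finset.univ.filter (fun j : Fin n => j < i)).sup f := by
            have h2 := (hf i).2
            rw [sup_eq_left.mpr (Nat.zero_le _)] at h2
            omega
          have hb := scond_entry_bound hf j₀
          have hfj₀ : f j₀ = j₀.1 + 1 := by omega
          have hj0i : j₀.1 = i.1 - 1 := by omega
          exact IHk j₀.1 (by omega) j₀ rfl hfj₀ j (by omega)
    exact fun h => key i.1 i rfl h
  · intro h
    exact h i le_rfl

/-! ### The binomial/Bell expansion -/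

lemma bin_pow (n t : ℕ) : ∑ r ∈ Finset.range (n+1), n.choose r * t^(n-r) = (t+1)^n := by
  rw [add_pow]
  simp only [one_pow, mul_one, Nat.cast_id]
  rw [← Finset.sum_range_reflect (fun k => t^k * n.choose k) (n+1)]
  apply Finset.sum_congr rfl
  intro r hr
  have hr' : r ≤ n := by
    have := Finset.mem_range.mp hr
    omega
  have e1 : n + 1 - 1 - r = n - r := by omega
  rw [e1, Nat.choose_symm hr', mul_comm]

lemma chu (m i t : ℕ) (hi : i ≤ m) :
    ∑ q ∈ Finset.range (m+1), m.choose q * q.choose i * t^(m-q)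
      = m.choose i * (t+1)^(m-i) := by
  have hsub : Finset.Ico i (m+1) ⊆ Finset.range (m+1) := by
    intro q hq
    simp only [Finset.mem_Ico] at hq
    simp only [Finset.mem_range]
    omega
  have hz : ∀ q ∈ Finset.range (m+1), q ∉ Finset.Ico i (m+1) →
      m.choose q * q.choose i * t^(m-q) = 0 := by
    intro q hq hq'
    have h1 : q < i := by
      simp only [Finset.mem_range] at hq
      simp only [Finset.mem_Ico] at hq'
      omega
    rw [Nat.choose_eq_zero_of_lt h1]
    ring
  rw [← Finset.sum_subset hsub hz, Finset.sum_Ico_eq_sum_range]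
  have e : m + 1 - i = (m - i) + 1 := by omega
  rw [e]
  have hterm : ∀ r ∈ Finset.range ((m-i)+1),
      m.choose (i+r) * (i+r).choose i * t^(m-(i+r))
        = m.choose i * ((m-i).choose r * t^((m-i)-r)) := by
    intro r hr
    have hr' : r ≤ m - i := by
      have := Finset.mem_range.mp hr
      omega
    have h2 : i + r ≤ m := by omega
    have h1 : i ≤ i + r := by omega
    have hc := Nat.choose_mul (n := m) h1
    rw [show i + r - i = r from by omega] at hc
    have e2 : m - (i + r) = (m - i) - r := by omega
    rw [e2, hc]
    ring
  rw [Finset.sum_congr rfl hterm, ← Finset.mul_sum, bin_pow]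

lemma B_zero : (RGS 0).card = 1 := by
  rw [RGS_eq_Sset, card_Sset]
  rfl

lemma B_succ (ℓ : ℕ) : (RGS (ℓ+1)).card = Nrec ℓ 1 := by
  rw [RGS_eq_Sset, card_Sset]
  show 0 * Nrec ℓ 0 + Nrec ℓ (0+1) = Nrec ℓ 1
  simp

lemma theta_eq : ∀ m t : ℕ,
    (∑ ℓ ∈ Finset.range (m+1), m.choose ℓ * t^(m-ℓ) * (RGS ℓ).card) = Nrec m t := by
  intro m
  induction m using Nat.strong_induction_on with
  | _ m IH =>
    cases m with
    | zero =>
      intro t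
      simp [Nrec, B_zero]
    | succ m =>
      intro t
      rw [Finset.sum_range_succ']
      have e0 : (m+1).choose 0 * t^(m+1-0) * (RGS 0).card = t^(m+1) := by
        simp [B_zero]
      rw [e0]
      have hterm : ∀ q ∈ Finset.range (m+1),
          (m+1).choose (q+1) * t^(m+1-(q+1)) * (RGS (q+1)).card
            = m.choose q * t^(m-q) * (RGS (q+1)).card
              + m.choose (q+1) * t^(m-q) * (RGS (q+1)).card := by
        intro q hq
        rw [Nat.choose_succ_succ]
        have e1 : m + 1 - (q+1) = m - q := by omega
        rw [e1, Nat.add_mul, Nat.add_mul]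
      rw [Finset.sum_congr rfl hterm, Finset.sum_add_distrib]
      have hY : (∑ q ∈ Finset.range (m+1), m.choose (q+1) * t^(m-q) * (RGS (q+1)).card)
            + t^(m+1) = t * Nrec m t := by
        have h1 : (∑ q ∈ Finset.range (m+1), m.choose (q+1) * t^(m-q) * (RGS (q+1)).card)
            = ∑ q ∈ Finset.range m, m.choose (q+1) * t^(m-q) * (RGS (q+1)).card := by
          rw [Finset.sum_range_succ]
          simp [Nat.choose_succ_self]
        have h2 : t * Nrec m t
            = ∑ ℓ ∈ Finset.range (m+1), t * (m.choose ℓ * t^(m-ℓ) * (RGS ℓ).card) := by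
          rw [← Finset.mul_sum, IH m (by omega) t]
        rw [h1, h2, Finset.sum_range_succ']
        congr 1
        · apply Finset.sum_congr rfl
          intro q hq
          have hq' : q < m := Finset.mem_range.mp hq
          have e : m - q = (m - (q+1)) + 1 := by omega
          rw [e, pow_succ']
          ring
        · simp [B_zero, pow_succ']
      have hX : (∑ q ∈ Finset.range (m+1), m.choose q * t^(m-q) * (RGS (q+1)).card)
          = Nrec m (t+1) := by
        have hB : ∀ q ∈ Finset.range (m+1),
            (RGS (q+1)).card = ∑ i ∈ Finset.range (q+1), q.choose i * (RGS i).card := by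
          intro q hq
          rw [B_succ, ← IH q (Finset.mem_range.mp hq) 1]
          apply Finset.sum_congr rfl
          intro i _
          simp
        calc (∑ q ∈ Finset.range (m+1), m.choose q * t^(m-q) * (RGS (q+1)).card)
            = ∑ q ∈ Finset.range (m+1), ∑ i ∈ Finset.range (m+1),
                m.choose q * t^(m-q) * (q.choose i * (RGS i).card) := by
              apply Finset.sum_congr rfl
              intro q hq
              rw [hB q hq, Finset.mul_sum]
              have hsub : Finset.range (q+1) ⊆ Finset.range (m+1) :=
                Finset.range_subset_range.mpr (by have := Finset.mem_range.mp hq; omega)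
              refine Finset.sum_subset hsub ?_
              intro i _ hni
              have h1 : q < i := by
                simp only [Finset.mem_range] at hni
                omega
              rw [Nat.choose_eq_zero_of_lt h1]
              ring
          _ = ∑ i ∈ Finset.range (m+1),
                (∑ q ∈ Finset.range (m+1), m.choose q * q.choose i * t^(m-q)) * (RGS i).card := by
              rw [Finset.sum_comm]
              apply Finset.sum_congr rfl
              intro i _
              rw [Finset.sum_mul]
              apply Finset.sum_congr rfl
              intro q _
              ring
          _ = ∑ i ∈ Finset.range (m+1), m.choose i * (t+1)^(m-i) * (RGS i).card := by
              apply Finset.sum_congr rfl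
              intro i hi
              rw [chu m i t (by have := Finset.mem_range.mp hi; omega)]
          _ = Nrec m (t+1) := IH m (by omega) (t+1)
      show _ = Nrec (m+1) t
      have hN : Nrec (m+1) t = t * Nrec m t + Nrec m (t+1) := rfl
      rw [hN, ← hY, ← hX]
      ring

/-! ### The telescoping identity -/

lemma key_sum (m : ℕ) :
    ∑ k ∈ Finset.range m, Nrec (m - k) (k+1)
      = m + ∑ k ∈ Finset.range m, (k+1)^2 * Nrec (m - k - 1) (k+1) := by
  have h1 : ∀ k ∈ Finset.range m, (k+1) * Nrec (m-k) (k+1)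
      = (k+1)^2 * Nrec (m-k-1) (k+1) + (k+1) * Nrec (m-k-1) (k+2) := by
    intro k hk
    have hk' : k < m := Finset.mem_range.mp hk
    obtain ⟨d, hd⟩ : ∃ d, m - k = d + 1 := ⟨m - k - 1, by omega⟩
    rw [hd]
    simp only [Nat.add_sub_cancel]
    show (k+1) * ((k+1) * Nrec d (k+1) + Nrec d (k+1+1)) = _
    ring
  have E1 : ∑ k ∈ Finset.range m, (k+1) * Nrec (m-k) (k+1)
      = (∑ k ∈ Finset.range m, (k+1)^2 * Nrec (m-k-1) (k+1))
        + ∑ k ∈ Finset.range m, (k+1) * Nrec (m-k-1) (k+2) := by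
    rw [Finset.sum_congr rfl h1, Finset.sum_add_distrib]
  have R1 : ∑ k ∈ Finset.range (m+1), k * Nrec (m-k) (k+1)
      = ∑ k ∈ Finset.range m, (k+1) * Nrec (m-k-1) (k+2) := by
    rw [Finset.sum_range_succ']
    simp only [Nat.zero_mul, Nat.add_zero]
    apply Finset.sum_congr rfl
    intro k _
    have e1 : m - (k+1) = m - k - 1 := by omega
    rw [e1]
  have R2 : ∑ k ∈ Finset.range (m+1), k * Nrec (m-k) (k+1)
      = (∑ k ∈ Finset.range m, k * Nrec (m-k) (k+1)) + m := by
    rw [Finset.sum_range_succ]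
    congr 1
    simp [Nrec]
  have E2 : ∑ k ∈ Finset.range m, (k+1) * Nrec (m-k) (k+1)
      = (∑ k ∈ Finset.range m, k * Nrec (m-k) (k+1))
        + ∑ k ∈ Finset.range m, Nrec (m-k) (k+1) := by
    rw [← Finset.sum_add_distrib]
    apply Finset.sum_congr rfl
    intro k _
    ring
  rw [← R1, R2] at E1
  rw [E2] at E1
  omega

/-! ### Main theorem -/

lemma sum_fix (n : ℕ) :
    ∑ π ∈ RGS n, fixCount π = ∑ k ∈ Finset.range n, Nrec (n - (k+1)) (k+1) := by
  have hcard : ∀ i : Fin n, ((RGS n).filter (fun π => π i = (i : ℕ) + 1)).card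
      = Nrec (n - ((i : ℕ)+1)) ((i : ℕ)+1) := by
    intro i
    have hfil : (RGS n).filter (fun π => π i = (i : ℕ)+1)
        = (Sset n 0).filter (idpfx 0 ((i : ℕ)+1)) := by
      ext f
      simp only [Finset.mem_filter, RGS_eq_Sset]
      constructor
      · rintro ⟨hf, hfi⟩
        refine ⟨hf, ?_⟩
        intro j hj
        have h := (fix_iff (mem_Sset.mp hf) i).mp hfi j (Nat.lt_succ_iff.mp hj)
        rw [Nat.zero_add]
        exact h
      · rintro ⟨hf, hp⟩
        refine ⟨hf, ?_⟩
        have h := hp i (Nat.lt_succ_self _)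
        rwa [Nat.zero_add] at h
    rw [hfil, card_pfx ((i : ℕ)+1) n 0 i.isLt]
    congr 1
    exact Nat.zero_add _
  have step1 : ∑ π ∈ RGS n, fixCount π
      = ∑ i : Fin n, ((RGS n).filter (fun π => π i = (i : ℕ) + 1)).card := by
    have h : ∀ π ∈ RGS n, fixCount π = ∑ i : Fin n, if π i = (i : ℕ)+1 then 1 else 0 := by
      intro π _
      simp only [fixCount, Finset.card_filter]
    rw [Finset.sum_congr rfl h, Finset.sum_comm]
    apply Finset.sum_congr rfl
    intro i _
    rw [Finset.card_filter]
  rw [step1, Finset.sum_congr rfl (fun i (_ : i ∈ Finset.univ) => hcard i)]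
  exact Fin.sum_univ_eq_sum_range (fun k => Nrec (n - (k+1)) (k+1)) n

lemma lhs_split (m : ℕ) :
    ∑ k ∈ Finset.range (m+1), Nrec (m+1-(k+1)) (k+1)
      = (∑ k ∈ Finset.range m, Nrec (m-k) (k+1)) + 1 := by
  rw [Finset.sum_range_succ]
  congr 1
  · apply Finset.sum_congr rfl
    intro k _
    have e : m + 1 - (k+1) = m - k := by omega
    rw [e]
  · have e : m + 1 - (m+1) = 0 := by omega
    rw [e]
    rfl

lemma rhs_reindex (m : ℕ) :
    ∑ j ∈ Finset.Icc 1 (m+1-1), j^2 * Nrec (m+1-j-1) j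
      = ∑ k ∈ Finset.range m, (k+1)^2 * Nrec (m-k-1) (k+1) := by
  have e : m + 1 - 1 = m := by omega
  rw [e, ← Finset.Ico_add_one_right_eq_Icc, Finset.sum_Ico_eq_sum_range]
  have e2 : m + 1 - 1 = m := by omega
  rw [e2]
  apply Finset.sum_congr rfl
  intro k _
  have e3 : 1 + k = k + 1 := by omega
  rw [e3]
  have e4 : m + 1 - (k+1) - 1 = m - k - 1 := by omega
  rw [e4]

/-- For `n ≥ 2`, the total number of fixed points over all RGS of length `n`
equals `n + Σ_{j=1}^{n-1} j² Θ_{n-j-1}(j)`, where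
`Θ_m(t) = Σ_{ℓ=0}^{m} C(m,ℓ) t^{m-ℓ} B_ℓ` and `B_ℓ = |R_ℓ|`. -/
theorem rgs_total_fixed_points_bell (n : ℕ) (hn : 2 ≤ n) :
    ∑ π ∈ RGS n, fixCount π
      = n + ∑ j ∈ Finset.Icc 1 (n - 1), j ^ 2 *
          ∑ ℓ ∈ Finset.range (n - j - 1 + 1),
            (n - j - 1).choose ℓ * j ^ (n - j - 1 - ℓ) * (RGS ℓ).card := by
  obtain ⟨m, rfl⟩ : ∃ m, n = m + 1 := ⟨n - 1, by omega⟩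
  rw [sum_fix (m+1), lhs_split m, key_sum m]
  have h1 : ∀ j ∈ Finset.Icc 1 (m+1-1), (j ^ 2 *
      ∑ ℓ ∈ Finset.range (m+1-j-1+1),
        (m+1-j-1).choose ℓ * j ^ (m+1-j-1-ℓ) * (RGS ℓ).card)
      = j^2 * Nrec (m+1-j-1) j := by
    intro j _
    rw [theta_eq (m+1-j-1) j]
  rw [Finset.sum_congr rfl h1, rhs_reindex m]
  ring
end
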